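/- arXiv:1106.2227 — 8 statements merged into one kernel-verified Lean document; each statement's English description precedes it below -/
import Mathlib

section
/- If a convex set C in a real vector space L can be written as a finite intersection of convex sets H_1,...,H_n ⊆ L each having convex complement L \ H_i, then C hides no infinite set: there is no infinite set A ⊆ L \ C such that for all distinct a,b ∈ A the closed segment [a,b] meets C. -/
theorem stmt_0 {L : Type*} [AddCommGroup L] [Module ℝ L]
    (C : Set L) (hC : Convex ℝ C)
    (n : ℕ) (H : Fin n → Set L)
    (hH : ∀ i, Convex ℝ (H i)) (hHc : ∀ i, Convex ℝ ((H i)ᶜ))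
    (hCeq : C = ⋂ i, H i) :
    ¬ ∃ A : Set L, A.Infinite ∧ A ∩ C = ∅ ∧
      ∀ a ∈ A, ∀ b ∈ A, a ≠ b → (segment ℝ a b ∩ C).Nonempty := by
  rintro ⟨A, hInf, hdisj, hseg⟩
  have hnotC : ∀ a : A, ∃ i, (a : L) ∉ H i := by
    rintro ⟨a, ha⟩
    by_contra h
    push_neg at h
    have haC : a ∈ C := by rw [hCeq]; exact Set.mem_iInter.2 h
    have : a ∈ A ∩ C := ⟨ha, haC⟩
    simp [hdisj] at this
  choose f hf using hnotC
  have hfinj : Function.Injective f := by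
    rintro ⟨a, ha⟩ ⟨b, hb⟩ hfe
    by_contra hne
    have hab : a ≠ b := fun h => hne (by simpa using h)
    obtain ⟨c, hcseg, hcC⟩ := hseg a ha b hb hab
    have hsub : segment ℝ a b ⊆ (H (f ⟨a, ha⟩))ᶜ := by
      apply (hHc _).segment_subset (hf ⟨a, ha⟩)
      rw [hfe]; exact hf ⟨b, hb⟩
    have : c ∈ H (f ⟨a, ha⟩) := by
      rw [hCeq] at hcC; exact Set.mem_iInter.1 hcC _
    exact hsub hcseg this
  have : Finite A := Finite.of_injective f hfinj
  exact hInf.to_subtype.not_finite this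
end

section
/- Let T : X → Y be an affine map between real vector spaces, D ⊆ Y a convex set, C = T⁻¹(D), and A ⊆ X \ C a set on which T is injective. Then C hides A if and only if D hides T(A). -/
theorem stmt_3 {X Y : Type*}
    [AddCommGroup X] [Module ℝ X] [AddCommGroup Y] [Module ℝ Y]
    (T : X →ᵃ[ℝ] Y) (D : Set Y) (hD : Convex ℝ D)
    (C : Set X) (hC : C = T ⁻¹' D)
    (A : Set X) (hA : A ⊆ Cᶜ) (hinj : Set.InjOn T A) :
    (A ∩ C = ∅ ∧ ∀ a ∈ A, ∀ b ∈ A, a ≠ b → (segment ℝ a b ∩ C).Nonempty) ↔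
    ((T '' A) ∩ D = ∅ ∧ ∀ a ∈ T '' A, ∀ b ∈ T '' A, a ≠ b →
      (segment ℝ a b ∩ D).Nonempty) := by
  subst hC
  constructor
  · rintro ⟨h1, h2⟩
    constructor
    · ext y
      simp only [Set.mem_inter_iff, Set.mem_image, Set.mem_empty_iff_false, iff_false]
      rintro ⟨⟨a, haA, rfl⟩, hyD⟩
      exact hA haA hyD
    · rintro _ ⟨a, haA, rfl⟩ _ ⟨b, hbA, rfl⟩ hne
      obtain ⟨x, hxseg, hxC⟩ := h2 a haA b hbA (fun h => hne (by rw [h]))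
      exact ⟨T x, by rw [← image_segment ℝ T]; exact ⟨x, hxseg, rfl⟩, hxC⟩
  · rintro ⟨h1, h2⟩
    constructor
    · ext x
      simp only [Set.mem_inter_iff, Set.mem_empty_iff_false, iff_false]
      rintro ⟨hxA, hxC⟩
      exact hA hxA hxC
    · intro a haA b hbA hne
      obtain ⟨y, hyseg, hyD⟩ := h2 (T a) ⟨a, haA, rfl⟩ (T b) ⟨b, hbA, rfl⟩
        (fun h => hne (hinj haA hbA h))
      rw [← image_segment ℝ T] at hyseg
      obtain ⟨x, hxseg, rfl⟩ := hyseg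
      exact ⟨x, hxseg, hyD⟩
end

section
/- The infinite-dimensional simplex Δ ⊆ c₀₀ hides no infinite set: there is no infinite set A ⊆ c₀₀ \ Δ such that for all distinct a,b ∈ A the segment [a,b] meets Δ. -/
theorem stmt_5
    (Δ : Set (ℕ →₀ ℝ))
    (hΔ : Δ = {x : ℕ →₀ ℝ | (∀ n, 0 ≤ x n) ∧ x.sum (fun _ v => v) = 1}) :
    ¬ ∃ A : Set (ℕ →₀ ℝ), A.Infinite ∧ A ∩ Δ = ∅ ∧
      ∀ a ∈ A, ∀ b ∈ A, a ≠ b → (segment ℝ a b ∩ Δ).Nonempty := by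
  rintro ⟨A, hAinf, hdisj, hseg⟩
  set S : (ℕ →₀ ℝ) →ₗ[ℝ] ℝ := Finsupp.lsum ℝ (fun _ => LinearMap.id) with hSdef0
  have hSdef : ∀ f : ℕ →₀ ℝ, S f = f.sum fun _ v => v := by
    intro f; rfl
  have hAΔ : ∀ y ∈ A, y ∉ Δ := by
    intro y hy hyΔ
    exact Set.eq_empty_iff_forall_notMem.mp hdisj y ⟨hy, hyΔ⟩
  -- extract segment data
  have hsegdata : ∀ a ∈ A, ∀ b ∈ A, a ≠ b →
      ∃ u v : ℝ, 0 < u ∧ 0 < v ∧ u + v = 1 ∧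
        (∀ n, 0 ≤ u * a n + v * b n) ∧ u * S a + v * S b = 1 := by
    intro a ha b hb hab
    obtain ⟨x, hxseg, hxΔ⟩ := hseg a ha b hb hab
    obtain ⟨u, v, hu, hv, huv, hx⟩ := hxseg
    subst hΔ
    obtain ⟨hxpos, hxsum⟩ := hxΔ
    have hune : u ≠ 0 := by
      rintro rfl
      have hv1 : v = 1 := by linarith
      subst hv1
      simp only [zero_smul, one_smul, zero_add] at hx
      exact hAΔ b hb (hx ▸ ⟨hxpos, hxsum⟩)
    have hvne : v ≠ 0 := by
      rintro rfl
      have hu1 : u = 1 := by linarith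
      subst hu1
      simp only [zero_smul, one_smul, add_zero] at hx
      exact hAΔ a ha (hx ▸ ⟨hxpos, hxsum⟩)
    refine ⟨u, v, lt_of_le_of_ne hu (Ne.symm hune), lt_of_le_of_ne hv (Ne.symm hvne), huv, ?_, ?_⟩
    · intro n
      have := hxpos n
      rwa [← hx, Finsupp.add_apply, Finsupp.smul_apply, Finsupp.smul_apply,
        smul_eq_mul, smul_eq_mul] at this
    · have : S x = 1 := by rw [hSdef]; exact hxsum
      rw [← hx] at this
      simpa [map_add, map_smul, smul_eq_mul] using this
  -- key: a negative coordinate of one point forces positivity in any other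
  have key : ∀ a ∈ A, ∀ b ∈ A, a ≠ b → ∀ n, a n < 0 → 0 < b n := by
    intro a ha b hb hab n hn
    obtain ⟨u, v, hu, hv, huv, hpos, -⟩ := hsegdata a ha b hb hab
    have h1 := hpos n
    nlinarith [mul_pos hu (neg_pos.mpr hn)]
  -- at most one point on each open side of the hyperplane S = 1
  have hgt : ∀ a ∈ A, ∀ b ∈ A, a ≠ b → 1 < S a → 1 < S b → False := by
    intro a ha b hb hab hca hcb
    obtain ⟨u, v, hu, hv, huv, -, hsum⟩ := hsegdata a ha b hb hab
    nlinarith [mul_pos hu (sub_pos.mpr hca), mul_pos hv (sub_pos.mpr hcb)]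
  have hlt : ∀ a ∈ A, ∀ b ∈ A, a ≠ b → S a < 1 → S b < 1 → False := by
    intro a ha b hb hab hca hcb
    obtain ⟨u, v, hu, hv, huv, -, hsum⟩ := hsegdata a ha b hb hab
    nlinarith [mul_pos hu (sub_pos.mpr hca), mul_pos hv (sub_pos.mpr hcb)]
  set Ap := {a ∈ A | 1 < S a} with hAp
  set Am := {a ∈ A | S a < 1} with hAm
  have hApfin : Ap.Finite := by
    apply Set.Subsingleton.finite
    intro a ha b hb
    by_contra hne
    exact hgt a ha.1 b hb.1 hne ha.2 hb.2
  have hAmfin : Am.Finite := by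
    apply Set.Subsingleton.finite
    intro a ha b hb
    by_contra hne
    exact hlt a ha.1 b hb.1 hne ha.2 hb.2
  set A1 := {a ∈ A | S a = 1} with hA1def
  have hA1 : A1.Infinite := by
    refine (hAinf.diff (hApfin.union hAmfin)).mono ?_
    rintro a ⟨ha, hna⟩
    simp only [Set.mem_union, hAp, hAm, Set.mem_setOf_eq, not_or] at hna
    refine ⟨ha, ?_⟩
    rcases lt_trichotomy (S a) 1 with h | h | h
    · exact absurd ⟨ha, h⟩ hna.2
    · exact h
    · exact absurd ⟨ha, h⟩ hna.1
  have hneg : ∀ a : ℕ →₀ ℝ, ∃ n, a ∈ A1 → a n < 0 := by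
    intro a
    by_cases ha : a ∈ A1
    · have hsum : a.sum (fun _ v => v) = 1 := by rw [← hSdef]; exact ha.2
      by_contra hcon
      push_neg at hcon
      exact hAΔ a ha.1 (by rw [hΔ]; exact ⟨fun n => (hcon n).2, hsum⟩)
    · exact ⟨0, fun h => absurd h ha⟩
  choose nf hnf using hneg
  obtain ⟨b, hbA1⟩ := hA1.nonempty
  have hinj : Set.InjOn nf A1 := by
    intro a ha a' ha' he
    by_contra hne
    have h1 : a (nf a) < 0 := hnf a ha
    have h2 : a' (nf a') < 0 := hnf a' ha'
    have := key a' ha'.1 a ha.1 (Ne.symm hne) (nf a') h2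
    rw [← he] at this
    linarith
  have himg : nf '' (A1 \ {b}) ⊆ ↑b.support := by
    rintro m ⟨a, ⟨haA1, hab⟩, rfl⟩
    have hab' : a ≠ b := by simpa using hab
    have := key a haA1.1 b hbA1.1 hab' (nf a) (hnf a haA1)
    simp only [Finset.coe_sort_coe, Finsupp.mem_support_iff, Finset.mem_coe]
    exact ne_of_gt this
  have hinf2 : (nf '' (A1 \ {b})).Infinite :=
    (hA1.diff (Set.finite_singleton b)).image (hinj.mono Set.diff_subset)
  exact hinf2 (b.support.finite_toSet.subset himg)
end

section
/- Let C be an infinite-dimensional closed convex subset of a complete linear metric space Y. Then there exists an injective continuous affine map T : ℓ² → Y such that T⁻¹(C) is a closed convex subset of ℓ² with nonempty interior. -/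
/-!
Fix `c₀ ∈ C` and a linearly independent sequence `w` with `c₀ + w n ∈ C`, and consider the
series `c₀ + ∑ s n • v n` with `v n = μ n • w n`. The metric of `Y` need not be translation
invariant, so the scales `μ n > 0` are chosen one at a time by compactness: the `n`-th step moves
every partial sum whose coefficients are bounded by `n + 2` by at most `ε n` (the bound grows, so
every bounded coefficient sequence is eventually covered), where `ε n ≤ 2⁻ⁿ⁻¹` is moreover a small
fraction of the distance to `c₀` of each earlier partial sum ending in a unit coefficient; that
distance is positive by linear independence.

Then `T x = lim (c₀ + ∑ (1 + x n) • v n)` exists for `x ∈ ℓ²`, is a locally uniform limit of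
continuous affine maps, and maps the closed unit ball into `C`, since for `‖x‖ ≤ 1` the partial sums
are convex combinations of `c₀` and the points `c₀ + 2ⁿ⁺² • v n ∈ C`. It is injective: if
`∑ a n • v n = 0` with `a ≠ 0`, rescale so that `max |a n| = a k = 1` (the maximum exists since
`a ∈ ℓ²`); the partial sum ending at index `k` has distance `d > 0` from `c₀`, but all later steps
together move it by at most `d / 2ᵏ⁺¹`.
-/

open Filter Topology Metric
open scoped lp ENNReal

theorem Convex.add_sum_smul_mem {𝕜 E ι : Type*} [Field 𝕜] [LinearOrder 𝕜] [IsStrictOrderedRing 𝕜]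
    [AddCommGroup E] [Module 𝕜 E] {C : Set E} (hC : Convex 𝕜 C) {c₀ : E} (h₀ : c₀ ∈ C)
    {s : Finset ι} {a : ι → 𝕜} {x : ι → E} (ha : ∀ i ∈ s, 0 ≤ a i) (ha₁ : ∑ i ∈ s, a i ≤ 1)
    (hx : ∀ i ∈ s, c₀ + x i ∈ C) : c₀ + ∑ i ∈ s, a i • x i ∈ C := by
  classical
  have hcomb : c₀ + ∑ i ∈ s, a i • x i = ∑ o ∈ s.insertNone,
      o.elim (1 - ∑ i ∈ s, a i) a • o.elim c₀ (fun i => c₀ + x i) := by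
    simp only [Finset.sum_insertNone, Option.elim, smul_add, Finset.sum_add_distrib,
      ← Finset.sum_smul, sub_smul, one_smul]
    abel
  rw [hcomb]
  refine hC.sum_mem ?_ (by simp [Finset.sum_insertNone]) ?_
  · rintro (_ | i) hi
    · simpa using ha₁
    · exact ha i (by simpa using hi)
  · rintro (_ | i) hi
    · exact h₀
    · exact hx i (by simpa using hi)

theorem exists_linearIndependent_add_mem {K V : Type*} [DivisionRing K] [AddCommGroup V]
    [Module K V] {C : Set V} (hC : ¬FiniteDimensional K (Submodule.span K C)) (c₀ : V) :
    ∃ w : ℕ → V, LinearIndependent K w ∧ ∀ i, c₀ + w i ∈ C := by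
  obtain ⟨b, hbt, hspan, hli⟩ := exists_linearIndependent K {x | c₀ + x ∈ C}
  have hb : b.Infinite := by
    intro hfin
    have := FiniteDimensional.span_of_finite K hfin
    rw [hspan] at this
    refine hC (Submodule.finiteDimensional_of_le
      (S₂ := Submodule.span K {x | c₀ + x ∈ C} ⊔ Submodule.span K {c₀}) ?_)
    rw [Submodule.span_le]
    intro c hc
    rw [← sub_add_cancel c c₀]
    exact add_mem (Submodule.mem_sup_left (Submodule.subset_span (by simpa using hc)))
      (Submodule.mem_sup_right (Submodule.mem_span_singleton_self c₀))
  exact ⟨fun i => hb.natEmbedding b i, hli.comp _ (hb.natEmbedding b).injective,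
    fun i => hbt (hb.natEmbedding b i).2⟩

theorem isCompact_setOf_forall_abs_le {ι : Type*} (R : ℝ) :
    IsCompact {s : ι → ℝ | ∀ i, |s i| ≤ R} := by
  convert isCompact_univ_pi fun _ : ι => isCompact_Icc (a := -R) (b := R) using 1
  ext s
  simp only [Set.mem_ofPred_eq, Set.mem_univ_pi, Set.mem_Icc, abs_le]

section Geometric

variable {X : Type*} [PseudoMetricSpace X] {f : ℕ → X} {C : ℝ} {n : ℕ}

theorem dist_add_le_geometric_two
    (hf : ∀ m, n ≤ m → dist (f m) (f (m + 1)) ≤ C * (1 / 2) ^ (m + 1)) (m : ℕ) :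
    dist (f (m + n)) (f (m + 1 + n)) ≤ C * (1 / 2) ^ n / 2 / 2 ^ m := by
  calc dist (f (m + n)) (f (m + 1 + n)) ≤ C * (1 / 2) ^ (m + n + 1) := by
        rw [add_right_comm]; exact hf _ (Nat.le_add_left n m)
    _ = C * (1 / 2) ^ n / 2 / 2 ^ m := by simp only [one_div_pow]; field_simp; ring

theorem dist_le_of_le_geometric_two_of_tendsto_of_ge
    (hf : ∀ m, n ≤ m → dist (f m) (f (m + 1)) ≤ C * (1 / 2) ^ (m + 1)) {a : X}
    (ha : Tendsto f atTop (𝓝 a)) : dist (f n) a ≤ C * (1 / 2) ^ n := by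
  simpa using dist_le_of_le_geometric_two_of_tendsto₀ (dist_add_le_geometric_two hf)
    ((tendsto_add_atTop_iff_nat n).2 ha)

theorem cauchySeq_of_le_geometric_two_of_ge
    (hf : ∀ m, n ≤ m → dist (f m) (f (m + 1)) ≤ C * (1 / 2) ^ (m + 1)) : CauchySeq f :=
  (cauchySeq_shift n).1 (cauchySeq_of_le_geometric_two (dist_add_le_geometric_two hf))

end Geometric

theorem exists_pos_le_half_pow_mul (θ : ℕ → ℝ → ℝ) (hθ : ∀ n e, 0 < e → 0 < θ n e) :
    ∃ ε : ℕ → ℝ, (∀ n, 0 < ε n) ∧ (∀ n, ε n ≤ (1 / 2) ^ (n + 1)) ∧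
      ∀ k n, k < n → ε n ≤ (1 / 2) ^ (n + 1) * θ k (ε k) := by
  obtain ⟨ε, hε0, hεsucc⟩ : ∃ ε : ℕ → ℝ, ε 0 = 1 / 2 ∧
      ∀ n, ε (n + 1) = ε n / 2 * min 1 (θ n (ε n)) :=
    ⟨fun n => Nat.rec (1 / 2) (fun n e => e / 2 * min 1 (θ n e)) n, rfl, fun _ => rfl⟩
  have hεpos : ∀ n, 0 < ε n := by
    intro n
    induction n with
    | zero => rw [hε0]; norm_num
    | succ n ih => rw [hεsucc]; exact mul_pos (half_pos ih) (lt_min one_pos (hθ n _ ih))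
  have hεsucc_le : ∀ n, ε (n + 1) ≤ ε n / 2 := fun n => by
    rw [hεsucc]; exact mul_le_of_le_one_right (half_pos (hεpos n)).le (min_le_left _ _)
  have hεle : ∀ n, ε n ≤ (1 / 2) ^ (n + 1) := by
    intro n
    induction n with
    | zero => rw [hε0]; norm_num
    | succ n ih => rw [pow_succ]; linarith [hεsucc_le n]
  refine ⟨ε, hεpos, hεle, fun k n hkn => ?_⟩
  induction n, Nat.succ_le_of_lt hkn using Nat.le_induction with
  | base =>
    calc ε (k + 1) ≤ ε k / 2 * θ k (ε k) := by
          rw [hεsucc]; exact mul_le_mul_of_nonneg_left (min_le_right _ _) (half_pos (hεpos k)).le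
      _ ≤ (1 / 2) ^ (k + 1) / 2 * θ k (ε k) := by
        gcongr
        exacts [(hθ k _ (hεpos k)).le, hεle k]
      _ = (1 / 2) ^ (k + 1 + 1) * θ k (ε k) := by ring
  | succ m hm ih => rw [pow_succ]; linarith [hεsucc_le m, ih hm]

theorem lp.abs_apply_le_norm {ι : Type*} {p : ℝ≥0∞} (hp : p ≠ 0) (x : ℓ^p(ι, ℝ)) (i : ι) :
    |x i| ≤ ‖x‖ := by
  simpa only [Real.norm_eq_abs] using lp.norm_apply_le_norm hp x i

theorem lp.exists_forall_abs_apply_le {ι : Type*} [Nonempty ι] {p : ℝ≥0∞} (hp : 0 < p.toReal)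
    (x : ℓ^p(ι, ℝ)) : ∃ k, ∀ i, |x i| ≤ |x k| := by
  by_cases hx : ∀ i, x i = 0
  · exact ⟨Classical.arbitrary ι, fun i => by simp [hx]⟩
  obtain ⟨j, hj⟩ := not_forall.1 hx
  have hfin : {i | |x j| ≤ |x i|}.Finite := by
    have hlt := ((lp.memℓp x).summable hp).tendsto_cofinite_zero.eventually
      (gt_mem_nhds (Real.rpow_pos_of_pos (norm_pos_iff.2 hj) p.toReal))
    refine (Filter.eventually_cofinite.1 hlt).subset fun i hi => ?_
    simp only [Set.mem_ofPred_eq, not_lt, Real.norm_eq_abs] at hi ⊢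
    exact Real.rpow_le_rpow (abs_nonneg _) hi hp.le
  obtain ⟨k, -, hkmax⟩ := hfin.toFinset.exists_max_image (fun i => |x i|) ⟨j, by simp⟩
  refine ⟨k, fun i => ?_⟩
  by_cases hi : |x j| ≤ |x i|
  · exact hkmax i (by simpa using hi)
  · exact (not_le.1 hi).le.trans (hkmax j (by simp))

section PartialSum

variable {Y : Type*} [AddCommGroup Y] [Module ℝ Y]

def partialSum (c₀ : Y) (v : ℕ → Y) (s : ℕ → ℝ) (n : ℕ) : Y :=
  c₀ + ∑ i ∈ Finset.range n, s i • v i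

variable {c₀ : Y} {v : ℕ → Y} {s : ℕ → ℝ} {n : ℕ}

theorem partialSum_succ : partialSum c₀ v s (n + 1) = partialSum c₀ v s n + s n • v n := by
  rw [partialSum, partialSum, Finset.sum_range_succ, add_assoc]

theorem partialSum_smul_right (μ : ℕ → ℝ) (w : ℕ → Y) :
    partialSum c₀ (fun i => μ i • w i) s n = partialSum c₀ w (fun i => s i * μ i) n := by
  simp only [partialSum, smul_smul]

theorem partialSum_succ_ne (hv : LinearIndependent ℝ v) (hs : s n ≠ 0) :
    partialSum c₀ v s (n + 1) ≠ c₀ := by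
  intro h
  rw [partialSum, add_eq_left] at h
  exact hs (linearIndependent_iff'.1 hv _ _ h n (Finset.self_mem_range_succ n))

theorem partialSum_mem {C : Set Y} (hC : Convex ℝ C) (hc₀ : c₀ ∈ C)
    (hv : ∀ i, c₀ + (2 : ℝ) ^ (i + 2) • v i ∈ C) (hs : ∀ i, s i ∈ Set.Icc (0 : ℝ) 2) :
    partialSum c₀ v s n ∈ C := by
  have hsum : partialSum c₀ v s n
      = c₀ + ∑ i ∈ Finset.range n, (s i / 2 ^ (i + 2)) • ((2 : ℝ) ^ (i + 2) • v i) := by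
    refine congrArg _ (Finset.sum_congr rfl fun i _ => ?_)
    rw [smul_smul, div_mul_cancel₀ _ (by positivity)]
  rw [hsum]
  refine hC.add_sum_smul_mem hc₀ (fun i _ => div_nonneg (hs i).1 (by positivity)) ?_
    (fun i _ => hv i)
  calc ∑ i ∈ Finset.range n, s i / 2 ^ (i + 2)
      ≤ ∑ i ∈ Finset.range n, (1 / 2) * (1 / 2 : ℝ) ^ i := by
        refine Finset.sum_le_sum fun i _ => ?_
        calc s i / 2 ^ (i + 2) ≤ 2 / 2 ^ (i + 2) := by gcongr; exact (hs i).2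
          _ = 1 / 2 * (1 / 2) ^ i := by rw [one_div_pow, pow_add]; field_simp
    _ ≤ 1 := by
        rw [← Finset.mul_sum]
        linarith [sum_geometric_two_le n]

theorem continuous_partialSum [TopologicalSpace Y] [ContinuousAdd Y] [ContinuousSMul ℝ Y]
    (c₀ : Y) (v : ℕ → Y) (n : ℕ) : Continuous fun s : ℕ → ℝ => partialSum c₀ v s n := by
  unfold partialSum
  fun_prop

end PartialSum

section Metric

variable {Y : Type*} [MetricSpace Y] [AddCommGroup Y] [Module ℝ Y] [ContinuousAdd Y]
  [ContinuousSMul ℝ Y]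

theorem IsCompact.eventually_forall_dist_add_smul_lt {K : Set Y} (hK : IsCompact K) (u : Y)
    (R : ℝ) {ε : ℝ} (hε : 0 < ε) :
    ∀ᶠ μ in 𝓝 (0 : ℝ), ∀ y ∈ K, ∀ t, |t| ≤ R → dist (y + (t * μ) • u) y < ε := by
  have hP : ∀ p ∈ K ×ˢ Set.Icc (-R) R, ∀ᶠ z : ℝ × (Y × ℝ) in 𝓝 (0, p),
      dist (z.2.1 + (z.2.2 * z.1) • u) z.2.1 < ε := by
    intro p _
    have hcont : Continuous fun z : ℝ × (Y × ℝ) => dist (z.2.1 + (z.2.2 * z.1) • u) z.2.1 := by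
      fun_prop
    have := hcont.tendsto (0, p)
    simp only [mul_zero, zero_smul, add_zero, dist_self] at this
    exact this.eventually (gt_mem_nhds hε)
  filter_upwards [(hK.prod isCompact_Icc).eventually_forall_of_forall_eventually
    (P := fun μ p => dist (p.1 + (p.2 * μ) • u) p.1 < ε) hP]
    with μ hμ y hy t ht using hμ (y, t) ⟨hy, abs_le.1 ht⟩

theorem exists_pos_le_dist_partialSum {w : ℕ → Y} (hw : LinearIndependent ℝ w) (c₀ : Y) (n : ℕ)
    {a : ℝ} (ha : a ≠ 0) :
    ∃ θ > 0, ∀ s : ℕ → ℝ, (∀ i, |s i| ≤ 1) → s n = a → θ ≤ dist c₀ (partialSum c₀ w s (n + 1)) := by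
  set S := {s : ℕ → ℝ | ∀ i, |s i| ≤ 1} ∩ {s | s n = a}
  rcases S.eq_empty_or_nonempty with hS | hS
  · exact ⟨1, one_pos, fun s hs hsn => absurd (hS.subset ⟨hs, hsn⟩) id⟩
  have hSc : IsCompact S :=
    (isCompact_setOf_forall_abs_le 1).inter_right
      (isClosed_eq (continuous_apply n) continuous_const)
  obtain ⟨s₀, ⟨-, hs₀⟩, hmin⟩ := hSc.exists_isMinOn hS
    (continuous_const.dist (continuous_partialSum c₀ w (n + 1))).continuousOn
  exact ⟨_, dist_pos.2 (partialSum_succ_ne hw (hs₀ ▸ ha)).symm, fun s hs hsn => hmin ⟨hs, hsn⟩⟩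

theorem exists_small_scale (c₀ : Y) (w : ℕ → Y) (n : ℕ) {e : ℝ} (he : 0 < e) :
    ∃ μ : ℝ, 0 < μ ∧ μ ≤ (1 / 2) ^ (n + 2) ∧
      ∀ s : ℕ → ℝ, (∀ i, |s i| ≤ n + 2) → ∀ t : ℝ, |t| ≤ n + 2 →
        dist (partialSum c₀ w s n + (t * μ) • w n) (partialSum c₀ w s n) ≤ e := by
  have hK := (isCompact_setOf_forall_abs_le (n + 2 : ℝ)).image (continuous_partialSum c₀ w n)
  obtain ⟨μ, hsmall, hμ, hμle⟩ := (((hK.eventually_forall_dist_add_smul_lt (w n) (n + 2) he)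
    |>.filter_mono nhdsWithin_le_nhds).and
    (Ioc_mem_nhdsGT (by positivity : (0 : ℝ) < (1 / 2) ^ (n + 2)))).exists
  exact ⟨μ, hμ, hμle, fun s hs t ht => (hsmall _ ⟨s, hs, rfl⟩ t ht).le⟩

structure IsStepBound (c₀ : Y) (v : ℕ → Y) (ε : ℕ → ℝ) : Prop where
  dist_succ_le : ∀ (n : ℕ) (s : ℕ → ℝ), (∀ i, |s i| ≤ n + 2) →
    dist (partialSum c₀ v s (n + 1)) (partialSum c₀ v s n) ≤ ε n
  le_half_pow : ∀ n, ε n ≤ (1 / 2) ^ (n + 1)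
  le_half_pow_mul_dist : ∀ k n : ℕ, k < n → ∀ s : ℕ → ℝ, (∀ i, |s i| ≤ 1) → s k = 1 →
    ε n ≤ (1 / 2) ^ (n + 1) * dist c₀ (partialSum c₀ v s (k + 1))

theorem exists_isStepBound {w : ℕ → Y} (hw : LinearIndependent ℝ w) (c₀ : Y) :
    ∃ μ ε : ℕ → ℝ, (∀ n, 0 < μ n ∧ μ n ≤ (1 / 2) ^ (n + 2)) ∧
      IsStepBound c₀ (fun n => μ n • w n) ε := by
  choose! μ hμ hμle hstep using fun n (e : ℝ) (he : 0 < e) => exists_small_scale c₀ w n he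
  choose! θ hθ hθle using fun n (e : ℝ) (he : 0 < e) =>
    exists_pos_le_dist_partialSum hw c₀ n (hμ n e he).ne'
  obtain ⟨ε, hεpos, hεle, hεθ⟩ := exists_pos_le_half_pow_mul θ hθ
  have hμ1 : ∀ n, μ n (ε n) ≤ 1 := fun n =>
    (hμle n _ (hεpos n)).trans (pow_le_one₀ (by norm_num) (by norm_num))
  have habs : ∀ (s : ℕ → ℝ) i, |s i * μ i (ε i)| ≤ |s i| := fun s i => by
    rw [abs_mul, abs_of_pos (hμ i _ (hεpos i))]
    exact mul_le_of_le_one_right (abs_nonneg _) (hμ1 i)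
  refine ⟨fun n => μ n (ε n), ε, fun n => ⟨hμ n _ (hεpos n), hμle n _ (hεpos n)⟩,
    ⟨fun n s hs => ?_, hεle, fun k n hkn s hs hsk => ?_⟩⟩
  · rw [partialSum_succ, partialSum_smul_right, smul_smul]
    exact hstep n _ (hεpos n) _ (fun i => (habs s i).trans (hs i)) (s n) (hs n)
  · refine (hεθ k n hkn).trans (mul_le_mul_of_nonneg_left ?_ (by positivity))
    rw [partialSum_smul_right]
    exact hθle k _ (hεpos k) _ (fun i => (habs s i).trans (hs i)) (by simp [hsk])

end Metric

section StepBound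

variable {Y : Type*} [MetricSpace Y] [AddCommGroup Y] [Module ℝ Y] {c₀ : Y} {v : ℕ → Y}
  {ε : ℕ → ℝ}

theorem IsStepBound.dist_succ_le_half_pow (h : IsStepBound c₀ v ε) {s : ℕ → ℝ} {n m : ℕ}
    (hs : ∀ i, |s i| ≤ n + 2) (hnm : n ≤ m) :
    dist (partialSum c₀ v s m) (partialSum c₀ v s (m + 1)) ≤ (1 / 2) ^ (m + 1) := by
  rw [dist_comm]
  refine (h.dist_succ_le m s fun i => (hs i).trans ?_).trans (h.le_half_pow m)
  exact_mod_cast Nat.add_le_add_right hnm 2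

theorem IsStepBound.dist_le_of_tendsto (h : IsStepBound c₀ v ε) {s : ℕ → ℝ} {n : ℕ}
    (hs : ∀ i, |s i| ≤ n + 2) {y : Y} (hy : Tendsto (partialSum c₀ v s) atTop (𝓝 y)) :
    dist (partialSum c₀ v s n) y ≤ (1 / 2) ^ n := by
  simpa using dist_le_of_le_geometric_two_of_tendsto_of_ge (C := 1)
    (fun m hm => by simpa using h.dist_succ_le_half_pow hs hm) hy

theorem IsStepBound.exists_tendsto [CompleteSpace Y] (h : IsStepBound c₀ v ε) {s : ℕ → ℝ}
    {R : ℝ} (hs : ∀ i, |s i| ≤ R) : ∃ y, Tendsto (partialSum c₀ v s) atTop (𝓝 y) := by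
  obtain ⟨n, hn⟩ := exists_nat_ge R
  exact cauchySeq_tendsto_of_complete (cauchySeq_of_le_geometric_two_of_ge (C := 1) fun m hm => by
    simpa using h.dist_succ_le_half_pow (n := n) (fun i => (hs i).trans (by linarith)) hm)

theorem IsStepBound.not_tendsto_base (h : IsStepBound c₀ v ε) (hv : LinearIndependent ℝ v)
    {s : ℕ → ℝ} {k : ℕ} (hs : ∀ i, |s i| ≤ 1) (hk : s k = 1) :
    ¬Tendsto (partialSum c₀ v s) atTop (𝓝 c₀) := by
  intro hlim
  set d := dist c₀ (partialSum c₀ v s (k + 1))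
  have hd : 0 < d := dist_pos.2 (partialSum_succ_ne hv (by simp [hk])).symm
  have htail : d ≤ d * (1 / 2) ^ (k + 1) := by
    have := dist_le_of_le_geometric_two_of_tendsto_of_ge (C := d) (n := k + 1)
      (fun m hm => ?_) hlim
    · rwa [dist_comm] at this
    rw [dist_comm, mul_comm]
    exact (h.dist_succ_le m s fun i => (hs i).trans (by linarith [m.cast_nonneg (α := ℝ)])).trans
      (h.le_half_pow_mul_dist k m hm s hs hk)
  have : (1 / 2 : ℝ) ^ (k + 1) < 1 := pow_lt_one₀ (by norm_num) (by norm_num) (by omega)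
  nlinarith

end StepBound

section Series

variable {Y : Type*} [TopologicalSpace Y] [AddCommGroup Y] [Module ℝ Y] [ContinuousAdd Y]
  [ContinuousSMul ℝ Y]

noncomputable def partialSumCLM (v : ℕ → Y) (n : ℕ) : ℓ²(ℕ, ℝ) →L[ℝ] Y :=
  ∑ i ∈ Finset.range n, (lp.evalCLM ℝ (fun _ : ℕ => ℝ) 2 i).smulRight (v i)

theorem partialSumCLM_apply (v : ℕ → Y) (n : ℕ) (x : ℓ²(ℕ, ℝ)) :
    partialSumCLM v n x = ∑ i ∈ Finset.range n, x i • v i := by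
  simp [partialSumCLM, lp.evalCLM]

theorem partialSum_add_coe (c₀ : Y) (v : ℕ → Y) (s : ℕ → ℝ) (x : ℓ²(ℕ, ℝ)) (n : ℕ) :
    partialSum c₀ v (s + ⇑x) n = partialSum c₀ v s n + partialSumCLM v n x := by
  simp [partialSum, partialSumCLM_apply, add_smul, Finset.sum_add_distrib, add_assoc]

theorem partialSum_coe (c₀ : Y) (v : ℕ → Y) (x : ℓ²(ℕ, ℝ)) (n : ℕ) :
    partialSum c₀ v x n = c₀ + partialSumCLM v n x := by
  simpa [partialSum] using partialSum_add_coe c₀ v 0 x n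

end Series

section AffineMap

variable {Y : Type*} [MetricSpace Y] [CompleteSpace Y] [AddCommGroup Y] [Module ℝ Y]
  [IsTopologicalAddGroup Y] [ContinuousSMul ℝ Y] {c₀ : Y} {v : ℕ → Y} {ε : ℕ → ℝ}

theorem IsStepBound.exists_tendsto_partialSumCLM (h : IsStepBound c₀ v ε) (x : ℓ²(ℕ, ℝ)) :
    ∃ y, Tendsto (fun n => partialSumCLM v n x) atTop (𝓝 y) := by
  obtain ⟨y, hy⟩ := h.exists_tendsto (lp.abs_apply_le_norm two_ne_zero x)
  exact ⟨y - c₀, by simpa [partialSum_coe] using hy.sub_const c₀⟩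

noncomputable def IsStepBound.linearMap (h : IsStepBound c₀ v ε) : ℓ²(ℕ, ℝ) →ₗ[ℝ] Y :=
  linearMapOfTendsto _ (fun n => (partialSumCLM v n : ℓ²(ℕ, ℝ) →ₗ[ℝ] Y))
    (tendsto_pi_nhds.2 fun x => tendsto_nhds_limUnder (h.exists_tendsto_partialSumCLM x))

theorem IsStepBound.tendsto_linearMap (h : IsStepBound c₀ v ε) (x : ℓ²(ℕ, ℝ)) :
    Tendsto (fun n => partialSumCLM v n x) atTop (𝓝 (h.linearMap x)) :=
  tendsto_nhds_limUnder (h.exists_tendsto_partialSumCLM x)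

theorem IsStepBound.linearMap_injective (h : IsStepBound c₀ v ε) (hv : LinearIndependent ℝ v) :
    Function.Injective h.linearMap := by
  refine (injective_iff_map_eq_zero _).2 fun a ha => ?_
  obtain ⟨k, hk⟩ := lp.exists_forall_abs_apply_le (by norm_num) a
  by_contra hne
  have hak : a k ≠ 0 := fun h0 =>
    hne (lp.ext (funext fun i => abs_nonpos_iff.1 ((hk i).trans_eq (by simp [h0]))))
  refine h.not_tendsto_base hv (s := ⇑((a k)⁻¹ • a)) (k := k) (fun i => ?_) (by simp [hak]) ?_
  · simpa [abs_mul, inv_mul_le_one₀ (abs_pos.2 hak)] using hk i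
  · have hlim := (h.tendsto_linearMap ((a k)⁻¹ • a)).const_add c₀
    rw [map_smul, ha, smul_zero, add_zero] at hlim
    exact hlim.congr fun n => (partialSum_coe c₀ v _ n).symm

noncomputable def IsStepBound.affineMap (h : IsStepBound c₀ v ε) : ℓ²(ℕ, ℝ) →ᵃ[ℝ] Y :=
  h.linearMap.toAffineMap + AffineMap.const ℝ _ (limUnder atTop (partialSum c₀ v 1))

theorem IsStepBound.tendsto_affineMap (h : IsStepBound c₀ v ε) (x : ℓ²(ℕ, ℝ)) :
    Tendsto (fun n => partialSum c₀ v (1 + ⇑x) n) atTop (𝓝 (h.affineMap x)) := by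
  have hone : Tendsto (partialSum c₀ v 1) atTop (𝓝 (limUnder atTop (partialSum c₀ v 1))) :=
    tendsto_nhds_limUnder (h.exists_tendsto (R := 1) fun i => by simp)
  convert (hone.add (h.tendsto_linearMap x)).congr fun n => (partialSum_add_coe c₀ v 1 x n).symm
    using 2
  simp [IsStepBound.affineMap, add_comm]

theorem IsStepBound.dist_affineMap_le (h : IsStepBound c₀ v ε) {x : ℓ²(ℕ, ℝ)} {n : ℕ}
    (hx : ‖x‖ ≤ n + 1) : dist (partialSum c₀ v (1 + ⇑x) n) (h.affineMap x) ≤ (1 / 2) ^ n := by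
  refine h.dist_le_of_tendsto (fun i => ?_) (h.tendsto_affineMap x)
  calc |(1 + ⇑x) i| ≤ 1 + |x i| := by simpa using abs_add_le 1 (x i)
    _ ≤ n + 2 := by linarith [lp.abs_apply_le_norm two_ne_zero x i]

theorem IsStepBound.continuous_affineMap (h : IsStepBound c₀ v ε) : Continuous h.affineMap := by
  refine TendstoLocallyUniformly.continuous
    (F := fun n (x : ℓ²(ℕ, ℝ)) => partialSum c₀ v (1 + ⇑x) n) (p := atTop) ?_ (Frequently.of_forall fun n => ?_)
  · rw [Metric.tendstoLocallyUniformly_iff]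
    intro δ hδ x₀
    obtain ⟨N₁, hN₁⟩ := exists_nat_ge ‖x₀‖
    obtain ⟨N₂, hN₂⟩ := exists_pow_lt_of_lt_one hδ (by norm_num : (1 / 2 : ℝ) < 1)
    refine ⟨ball x₀ 1, ball_mem_nhds x₀ one_pos, ?_⟩
    filter_upwards [eventually_ge_atTop N₁, eventually_ge_atTop N₂] with n hn₁ hn₂ x hx
    have hxn : ‖x‖ ≤ n + 1 := by
      rw [mem_ball, dist_eq_norm] at hx
      have hn : (N₁ : ℝ) ≤ n := by exact_mod_cast hn₁
      linarith [norm_sub_norm_le x x₀]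
    rw [dist_comm]
    calc _ ≤ (1 / 2) ^ n := h.dist_affineMap_le hxn
      _ ≤ (1 / 2) ^ N₂ := pow_le_pow_of_le_one (by norm_num) (by norm_num) hn₂
      _ < δ := hN₂
  · exact (continuous_const.add (partialSumCLM v n).continuous).congr fun x =>
      (partialSum_add_coe c₀ v 1 x n).symm

theorem IsStepBound.affineMap_injective (h : IsStepBound c₀ v ε) (hv : LinearIndependent ℝ v) :
    Function.Injective h.affineMap := fun x y hxy =>
  h.linearMap_injective hv (by simpa [IsStepBound.affineMap] using hxy)

theorem IsStepBound.affineMap_mem (h : IsStepBound c₀ v ε) {C : Set Y} (hC : IsClosed C)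
    (hconv : Convex ℝ C) (hc₀ : c₀ ∈ C) (hvC : ∀ i, c₀ + (2 : ℝ) ^ (i + 2) • v i ∈ C)
    {x : ℓ²(ℕ, ℝ)} (hx : ‖x‖ ≤ 1) : h.affineMap x ∈ C := by
  refine hC.mem_of_tendsto (h.tendsto_affineMap x) (Eventually.of_forall fun n =>
    partialSum_mem hconv hc₀ hvC fun i => ?_)
  have := abs_le.1 ((lp.abs_apply_le_norm two_ne_zero x i).trans hx)
  rw [Pi.add_apply, Pi.one_apply, Set.mem_Icc]
  constructor <;> linarith

end AffineMap

theorem stmt_8 {Y : Type*} [MetricSpace Y] [CompleteSpace Y]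
    [AddCommGroup Y] [Module ℝ Y] [IsTopologicalAddGroup Y] [ContinuousSMul ℝ Y]
    (C : Set Y) (hclosed : IsClosed C) (hconv : Convex ℝ C)
    (hne : C.Nonempty)
    (hinfdim : ¬ FiniteDimensional ℝ (Submodule.span ℝ C)) :
    ∃ T : lp (fun _ : ℕ => ℝ) 2 →ᵃ[ℝ] Y,
      Continuous T ∧ Function.Injective T ∧
      IsClosed (T ⁻¹' C) ∧ Convex ℝ (T ⁻¹' C) ∧
      (interior (T ⁻¹' C)).Nonempty := by
  obtain ⟨c₀, hc₀⟩ := hne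
  obtain ⟨w, hw, hwC⟩ := exists_linearIndependent_add_mem hinfdim c₀
  obtain ⟨μ, ε, hμ, h⟩ := exists_isStepBound hw c₀
  have hv : LinearIndependent ℝ fun n => μ n • w n :=
    hw.units_smul fun n => Units.mk0 (μ n) (hμ n).1.ne'
  have hvC : ∀ n, c₀ + (2 : ℝ) ^ (n + 2) • (μ n • w n) ∈ C := fun n => by
    rw [smul_smul]
    refine hconv.add_smul_mem hc₀ (hwC n) ⟨by positivity [(hμ n).1], ?_⟩
    calc (2 : ℝ) ^ (n + 2) * μ n ≤ 2 ^ (n + 2) * (1 / 2) ^ (n + 2) := by gcongr; exact (hμ n).2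
      _ = 1 := by rw [← mul_pow]; norm_num
  have hT := h.continuous_affineMap
  refine ⟨h.affineMap, hT, h.affineMap_injective hv, hclosed.preimage hT,
    hconv.affine_preimage _, 0, interior_mono (s := closedBall 0 1) (fun x hx => ?_) ?_⟩
  · exact h.affineMap_mem hclosed hconv hc₀ hvC (mem_closedBall_zero_iff.1 hx)
  · rw [interior_closedBall _ one_ne_zero]
    exact mem_ball_self one_pos
end

section
/- Let C̄ be a closed convex body in a real Hilbert space X, let x, z be two boundary points of C̄ each admitting a unique supporting functional, and suppose these supporting functionals are distinct. Then the open segment ]x,z[ lies in the interior of C̄. -/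
theorem stmt_9 {X : Type*} [NormedAddCommGroup X] [InnerProductSpace ℝ X]
    (Cb : Set X) (hclosed : IsClosed Cb) (hconv : Convex ℝ Cb)
    (hbody : (interior Cb).Nonempty)
    (x z : X) (hx : x ∈ frontier Cb) (hz : z ∈ frontier Cb)
    (fx fz : X →L[ℝ] ℝ)
    (hfx : ‖fx‖ = 1 ∧ ∀ c ∈ Cb, fx c ≤ fx x)
    (hfxu : ∀ g : X →L[ℝ] ℝ, (‖g‖ = 1 ∧ ∀ c ∈ Cb, g c ≤ g x) → g = fx)
    (hfz : ‖fz‖ = 1 ∧ ∀ c ∈ Cb, fz c ≤ fz z)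
    (hfzu : ∀ g : X →L[ℝ] ℝ, (‖g‖ = 1 ∧ ∀ c ∈ Cb, g c ≤ g z) → g = fz)
    (hne : fx ≠ fz) :
    openSegment ℝ x z ⊆ interior Cb := by
  intro y hy
  by_contra hyI
  have hxC : x ∈ Cb := by
    have := frontier_subset_closure hx
    rwa [hclosed.closure_eq] at this
  have hzC : z ∈ Cb := by
    have := frontier_subset_closure hz
    rwa [hclosed.closure_eq] at this
  obtain ⟨a, b, ha, hb, hab, hy⟩ := hy
  obtain ⟨w, hw⟩ := hbody
  -- separating functional at y
  obtain ⟨f, hf⟩ := geometric_hahn_banach_open_point hconv.interior isOpen_interior hyI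
  have hf0 : f ≠ 0 := by
    intro h
    have := hf w hw
    simp [h] at this
  -- f c ≤ f y for all c ∈ Cb
  have key : ∀ c ∈ Cb, f c ≤ f y := by
    intro c hc
    have tend : Filter.Tendsto (fun t : ℝ => (1 - t) * f c + t * f w) (nhdsWithin 0 (Set.Ioi 0))
        (nhds (f c)) := by
      have h1 : Filter.Tendsto (fun t : ℝ => (1 - t) * f c + t * f w) (nhds 0)
          (nhds ((1 - 0) * f c + 0 * f w)) := by
        exact (((continuous_const.sub continuous_id).mul continuous_const).add
          (continuous_id.mul continuous_const)).tendsto 0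
      simpa using h1.mono_left nhdsWithin_le_nhds
    refine le_of_tendsto tend ?_
    filter_upwards [Ioo_mem_nhdsGT_of_mem (by norm_num : (0:ℝ) ∈ Set.Ico 0 1)] with t ht
    have hm : (1 - t) • c + t • w ∈ interior Cb :=
      hconv.combo_closure_interior_mem_interior (subset_closure hc) hw
        (by linarith [ht.2]) ht.1 (by ring)
    have := hf _ hm
    simpa [map_add, map_smul, smul_eq_mul] using this.le
  set g : X →L[ℝ] ℝ := ‖f‖⁻¹ • f with hg
  have hgnorm : ‖g‖ = 1 := by
    have : ‖g‖ = ‖(‖f‖⁻¹)‖ * ‖f‖ := by rw [hg]; exact norm_smul (β := X →L[ℝ] ℝ) ‖f‖⁻¹ f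
    rw [this, norm_inv, norm_norm]
    exact inv_mul_cancel₀ (norm_ne_zero_iff.2 hf0)
  have gkey : ∀ c ∈ Cb, g c ≤ g y := by
    intro c hc
    have : ‖f‖⁻¹ * f c ≤ ‖f‖⁻¹ * f y :=
      mul_le_mul_of_nonneg_left (key c hc) (inv_nonneg.2 (norm_nonneg f))
    simpa [hg, smul_eq_mul] using this
  have hgy : g y = a * g x + b * g z := by
    rw [← hy]
    simp [map_add, map_smul, smul_eq_mul]
  have hgx : g x ≤ g y := gkey x hxC
  have hgz : g z ≤ g y := gkey z hzC
  have hgxy : g x = g y := by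
    by_contra h
    have hlt := mul_lt_mul_of_pos_left (lt_of_le_of_ne hgx h) ha
    have hle := mul_le_mul_of_nonneg_left hgz hb.le
    have hsum : a * g y + b * g y = g y := by rw [← add_mul, hab, one_mul]
    linarith
  have hgzy : g z = g y := by
    by_contra h
    have hlt := mul_lt_mul_of_pos_left (lt_of_le_of_ne hgz h) hb
    have hle := mul_le_mul_of_nonneg_left hgx ha.le
    have hsum : a * g y + b * g y = g y := by rw [← add_mul, hab, one_mul]
    linarith
  have e1 : g = fx := hfxu g ⟨hgnorm, fun c hc => hgxy ▸ gkey c hc⟩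
  have e2 : g = fz := hfzu g ⟨hgnorm, fun c hc => hgzy ▸ gkey c hc⟩
  exact hne (e1 ▸ e2)
end

section
/- Let C̄ be a closed convex body in a separable real Hilbert space X that is not a finite intersection of closed half-spaces of continuous linear functionals. Then C̄ hides some infinite set A ⊆ X \ C̄: for all distinct a,b ∈ A the segment [a,b] meets C̄. -/
/-!
Translate an interior point of the body to `0` and replace the body by its gauge `p`, a
nonnegative sublinear Lipschitz functional with `{p ≤ 1}` the body. A boundary point is
smooth when it has a unique supporting functional. By Mazur's argument (Baire category over a
dense sequence of directions, and Rademacher's theorem on lines) `p` is Gâteaux differentiable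
on a dense set, so smooth points are dense in the boundary; if they carried only finitely many
supporting functionals, the body would be the intersection of the corresponding half-spaces.

The hidden set is built greedily. Keep finitely many outside points, pairwise seeing each
other through the interior, together with infinitely many supporting functionals of smooth
points visible from all of them. Some visible smooth point `u` has infinitely many of these
functionals `g` with `g u ≤ 1 - δ`: otherwise two smooth points with different functionals
would have their midpoint on the boundary, and a supporting functional there would be the
supporting functional of both. The new point `(1 + ε) • u` still sees the old points for
small `ε`, and sees every smooth point whose functional is `≤ 1 - δ` at `u`.
-/

open Set Filter Topology

section

variable {X : Type*} [NormedAddCommGroup X] [NormedSpace ℝ X] {p : X → ℝ}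

def IsPolyhedral (C : Set X) : Prop :=
  ∃ (n : ℕ) (f : Fin n → X →L[ℝ] ℝ) (a : Fin n → ℝ), C = ⋂ i, {x : X | f i x ≤ a i}

theorem isPolyhedral_biInter_setOf_le_one {T : Set (X →L[ℝ] ℝ)} (hT : T.Finite) :
    IsPolyhedral (⋂ g ∈ T, {x | g x ≤ 1}) := by
  have := hT.to_subtype
  obtain ⟨n, ⟨e⟩⟩ := Finite.exists_equiv_fin T
  refine ⟨n, fun i ↦ e.symm i, fun _ ↦ 1, ?_⟩
  ext x
  simp only [mem_iInter, mem_ofPred_eq]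
  exact ⟨fun h i ↦ h _ (e.symm i).2, fun h g hg ↦ by simpa using h (e ⟨g, hg⟩)⟩

theorem IsPolyhedral.preimage_const_add {C : Set X} (hC : IsPolyhedral C) (z : X) :
    IsPolyhedral ((z + ·) ⁻¹' C) := by
  obtain ⟨n, f, a, rfl⟩ := hC
  refine ⟨n, f, fun i ↦ a i - f i z, ?_⟩
  ext x
  simp [le_sub_iff_add_le']

/-- For convex `p` this is Gâteaux differentiability of `p` at `x`. -/
def IsGateauxPoint (p : X → ℝ) (x : X) : Prop :=
  ∀ d : X, ∀ ε > 0, ∃ t > 0, p (x + t • d) + p (x - t • d) - 2 * p x < ε * t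

theorem isOpen_setOf_exists_secondDiff_lt (hp : Continuous p) (d : X) (ε : ℝ) :
    IsOpen {x | ∃ t > 0, p (x + t • d) + p (x - t • d) - 2 * p x < ε * t} := by
  have hU : {x | ∃ t > 0, p (x + t • d) + p (x - t • d) - 2 * p x < ε * t} =
      ⋃ t > 0, {x | p (x + t • d) + p (x - t • d) - 2 * p x < ε * t} := by
    ext; simp
  rw [hU]
  exact isOpen_biUnion fun t _ ↦ isOpen_lt (by fun_prop) continuous_const

theorem exists_secondDiff_lt_of_differentiableAt {φ : ℝ → ℝ} {s : ℝ}
    (hφ : DifferentiableAt ℝ φ s) {ε : ℝ} (hε : 0 < ε) :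
    ∃ t > 0, φ (s + t) + φ (s - t) - 2 * φ s < ε * t := by
  have hψ : HasDerivAt (fun t ↦ φ (s + t) + φ (s - t)) 0 0 := by
    have hplus := HasDerivAt.comp_const_add s 0 (by rw [add_zero]; exact hφ.hasDerivAt)
    have hminus := HasDerivAt.comp_const_sub s 0 (by rw [sub_zero]; exact hφ.hasDerivAt)
    simpa only [add_neg_cancel] using hplus.fun_add hminus
  have hlim := hψ.tendsto_slope_zero_right.eventually_lt_const hε
  obtain ⟨t, ht, ht₀ : 0 < t⟩ := (hlim.and self_mem_nhdsWithin).exists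
  refine ⟨t, ht₀, ?_⟩
  simp only [zero_add, add_zero, sub_zero, smul_eq_mul] at ht
  rw [inv_mul_lt_iff₀ ht₀] at ht
  linarith

theorem dense_setOf_exists_secondDiff_lt {K : NNReal} (hp : LipschitzWith K p) (d : X)
    {ε : ℝ} (hε : 0 < ε) :
    Dense {x | ∃ t > 0, p (x + t • d) + p (x - t • d) - 2 * p x < ε * t} := by
  refine dense_iff_inter_open.2 fun V hV ⟨x, hxV⟩ ↦ ?_
  have hline : LipschitzWith _ (fun s : ℝ ↦ p (x + s • d)) := hp.comp <|
    (isometry_add_left x).lipschitz.comp (ContinuousLinearMap.toSpanSingleton ℝ d).lipschitz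
  have hdiff := MeasureTheory.Measure.dense_of_ae
    (hline.ae_differentiableAt (μ := MeasureTheory.volume))
  have hW : {s : ℝ | x + s • d ∈ V} ∈ 𝓝 0 :=
    (hV.preimage (by fun_prop)).mem_nhds (by simpa using hxV)
  obtain ⟨s, hsdiff, hsV⟩ := hdiff.inter_nhds_nonempty hW
  obtain ⟨t, ht, hlt⟩ := exists_secondDiff_lt_of_differentiableAt hsdiff hε
  refine ⟨x + s • d, hsV, t, ht, ?_⟩
  simpa only [add_assoc, add_sub_assoc, ← add_smul, ← sub_smul] using hlt

theorem secondDiff_le_of_lipschitzWith {K : NNReal} (hp : LipschitzWith K p) (x d e : X)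
    {t : ℝ} (ht : 0 ≤ t) :
    p (x + t • d) + p (x - t • d) - 2 * p x ≤
      p (x + t • e) + p (x - t • e) - 2 * p x + 2 * K * (t * ‖d - e‖) := by
  have hplus := hp.le_add_mul (x + t • d) (x + t • e)
  have hminus := hp.le_add_mul (x - t • d) (x - t • e)
  rw [dist_add_left] at hplus
  rw [dist_sub_left] at hminus
  rw [dist_smul₀, dist_eq_norm, Real.norm_of_nonneg ht] at hplus hminus
  linarith

theorem dense_setOf_isGateauxPoint [CompleteSpace X] [TopologicalSpace.SeparableSpace X]
    {K : NNReal} (hp : LipschitzWith K p) : Dense {x | IsGateauxPoint p x} := by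
  obtain ⟨e, he⟩ := TopologicalSpace.exists_dense_seq X
  let U : ℕ × ℕ → Set X := fun ik ↦
    {x | ∃ t > 0, p (x + t • e ik.1) + p (x - t • e ik.1) - 2 * p x < (ik.2 + 1 : ℝ)⁻¹ * t}
  refine (dense_iInter_of_isOpen (f := U)
    (fun ik ↦ isOpen_setOf_exists_secondDiff_lt hp.continuous _ _)
    (fun ik ↦ dense_setOf_exists_secondDiff_lt hp _ (by positivity))).mono ?_
  intro x hx d ε hε
  obtain ⟨k, hk⟩ := exists_nat_one_div_lt (half_pos hε)
  have hKε : 0 < ε / (4 * (K + 1)) := by positivity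
  obtain ⟨i, hi⟩ := Metric.denseRange_iff.1 he d _ hKε
  obtain ⟨t, ht, hlt⟩ := mem_iInter.1 hx (i, k)
  refine ⟨t, ht, (secondDiff_le_of_lipschitzWith hp x d (e i) ht.le).trans_lt ?_⟩
  rw [← dist_eq_norm]
  have hK : 2 * K * (t * dist d (e i)) ≤ ε / 2 * t := by
    rw [lt_div_iff₀ (by positivity)] at hi
    nlinarith [dist_nonneg (x := d) (y := e i), NNReal.coe_nonneg K]
  have hk' : (k + 1 : ℝ)⁻¹ * t < ε / 2 * t := by
    rw [← one_div]; exact mul_lt_mul_of_pos_right hk ht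
  simp only at hlt
  linarith

structure IsNonnegSublinear (p : X → ℝ) : Prop where
  nonneg : ∀ x, 0 ≤ p x
  add_le : ∀ x y, p (x + y) ≤ p x + p y
  smul_of_nonneg : ∀ {c : ℝ}, 0 ≤ c → ∀ x, p (c • x) = c * p x

def IsSupportAt (p : X → ℝ) (g : X →L[ℝ] ℝ) (y : X) : Prop := (∀ z, g z ≤ p z) ∧ g y = 1

def HasUniqueSupport (p : X → ℝ) (y : X) (g : X →L[ℝ] ℝ) : Prop :=
  p y = 1 ∧ IsSupportAt p g y ∧ ∀ h, IsSupportAt p h y → h = g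

def uniqueSupports (p : X → ℝ) (R : Set X) : Set (X →L[ℝ] ℝ) :=
  {g | ∃ y ∈ R, HasUniqueSupport p y g}

def Sees (p : X → ℝ) (a b : X) : Prop := ∃ z ∈ segment ℝ a b, p z < 1

namespace IsNonnegSublinear

theorem map_zero (hp : IsNonnegSublinear p) : p 0 = 0 := by
  simpa using hp.smul_of_nonneg le_rfl (0 : X)

theorem le_mul_norm (hp : IsNonnegSublinear p) {K : NNReal} (hK : LipschitzWith K p) (z : X) :
    p z ≤ K * ‖z‖ := by
  simpa [hp.map_zero] using hK.le_add_mul z 0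

theorem convexOn (hp : IsNonnegSublinear p) : ConvexOn ℝ univ p :=
  ⟨convex_univ, fun x _ y _ a b ha hb _ ↦ by
    simpa only [hp.smul_of_nonneg ha, hp.smul_of_nonneg hb, smul_eq_mul] using
      hp.add_le (a • x) (b • y)⟩

theorem le_of_forall_lt_one (hp : IsNonnegSublinear p) {f : X →ₗ[ℝ] ℝ}
    (hf : ∀ z, p z < 1 → f z < 1) (z : X) : f z ≤ p z := by
  refine le_of_forall_gt_imp_ge_of_dense fun s hs ↦ ?_
  have hs₀ : 0 < s := (hp.nonneg z).trans_lt hs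
  have hlt : p (s⁻¹ • z) < 1 := by
    rw [hp.smul_of_nonneg (by positivity), inv_mul_lt_one₀ hs₀]
    exact hs
  have := hf _ hlt
  rw [map_smul, smul_eq_mul, inv_mul_lt_one₀ hs₀] at this
  exact this.le

theorem exists_le_apply_eq (hp : IsNonnegSublinear p) {K : NNReal} (hK : LipschitzWith K p)
    (y : X) : ∃ g : X →L[ℝ] ℝ, (∀ z, g z ≤ p z) ∧ g y = p y := by
  rcases eq_or_ne y 0 with rfl | hy₀
  · exact ⟨0, fun z ↦ hp.nonneg z, by simp [hp.map_zero]⟩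
  let f : X →ₗ.[ℝ] ℝ := LinearPMap.mkSpanSingleton y (p y) hy₀
  have hfle : ∀ x : f.domain, f x ≤ p x := by
    rintro ⟨x, hx⟩
    obtain ⟨c, rfl⟩ := Submodule.mem_span_singleton.1 hx
    have hfc : f ⟨c • y, hx⟩ = c • p y := by apply LinearPMap.mkSpanSingleton'_apply
    rw [hfc, smul_eq_mul]
    rcases le_or_gt 0 c with hc | hc
    · rw [hp.smul_of_nonneg hc]
    · exact (mul_nonpos_of_nonpos_of_nonneg hc.le (hp.nonneg y)).trans (hp.nonneg _)
  obtain ⟨g, hgf, hgp⟩ := exists_extension_of_le_sublinear f p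
    (fun c hc x ↦ hp.smul_of_nonneg hc.le x) hp.add_le hfle
  have hbound : ∀ z, ‖g z‖ ≤ K * ‖z‖ := fun z ↦ by
    rw [Real.norm_eq_abs, abs_le]
    constructor
    · have := (hgp (-z)).trans (hp.le_mul_norm hK (-z))
      rw [map_neg, norm_neg] at this
      linarith
    · exact (hgp z).trans (hp.le_mul_norm hK z)
  refine ⟨g.mkContinuous K hbound, hgp, ?_⟩
  have := hgf ⟨y, Submodule.mem_span_singleton_self y⟩
  exact this.trans (LinearPMap.mkSpanSingleton_apply ℝ ℝ hy₀ (p y))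

end IsNonnegSublinear

theorem IsGateauxPoint.eq_of_le_of_apply_eq {x : X} (hx : IsGateauxPoint p x)
    {g h : X →L[ℝ] ℝ} (hg : ∀ z, g z ≤ p z) (hgx : g x = p x) (hh : ∀ z, h z ≤ p z)
    (hhx : h x = p x) : g = h := by
  have key : ∀ g h : X →L[ℝ] ℝ, (∀ z, g z ≤ p z) → g x = p x → (∀ z, h z ≤ p z) →
      h x = p x → ∀ d, g d ≤ h d := by
    intro g h hg hgx hh hhx d
    refine le_of_forall_pos_lt_add fun ε hε ↦ ?_
    obtain ⟨t, ht, hlt⟩ := hx d ε hε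
    have hplus := hg (x + t • d)
    have hminus := hh (x - t • d)
    simp only [map_add, map_sub, map_smul, smul_eq_mul] at hplus hminus
    have : t * (g d - h d) < t * ε := by linarith
    linarith [lt_of_mul_lt_mul_left this ht.le]
  ext d
  exact le_antisymm (key g h hg hgx hh hhx d) (key h g hh hhx hg hgx d)

namespace IsNonnegSublinear

theorem exists_hasUniqueSupport_of_isGateauxPoint (hp : IsNonnegSublinear p) {K : NNReal}
    (hK : LipschitzWith K p) {x : X} (hx : IsGateauxPoint p x) (hpx : 0 < p x) :
    ∃ g, HasUniqueSupport p ((p x)⁻¹ • x) g := by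
  have hy : p ((p x)⁻¹ • x) = 1 := by
    rw [hp.smul_of_nonneg (by positivity), inv_mul_cancel₀ hpx.ne']
  have hsupp_x : ∀ g, IsSupportAt p g ((p x)⁻¹ • x) → g x = p x := fun g hg ↦ by
    have := hg.2
    rw [map_smul, smul_eq_mul, inv_mul_eq_one₀ hpx.ne'] at this
    exact this.symm
  obtain ⟨g, hgp, hgy⟩ := hp.exists_le_apply_eq hK ((p x)⁻¹ • x)
  have hg : IsSupportAt p g ((p x)⁻¹ • x) := ⟨hgp, hgy.trans hy⟩
  exact ⟨g, hy, hg, fun h hh ↦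
    hx.eq_of_le_of_apply_eq hh.1 (hsupp_x h hh) hg.1 (hsupp_x g hg)⟩

theorem setOf_eq_one_subset_closure [CompleteSpace X] [TopologicalSpace.SeparableSpace X]
    (hp : IsNonnegSublinear p) {K : NNReal} (hK : LipschitzWith K p) :
    {y | p y = 1} ⊆ closure {y | ∃ g, HasUniqueSupport p y g} := by
  intro y (hy : p y = 1)
  have hcont : ContinuousAt (fun x ↦ (p x)⁻¹ • x) y :=
    (hK.continuous.continuousAt.inv₀ (by simp [hy])).smul continuousAt_id
  rw [mem_closure_iff_nhds]
  intro V hV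
  have hpos : ∀ᶠ x in 𝓝 y, 0 < p x :=
    hK.continuous.continuousAt.eventually (lt_mem_nhds (by rw [hy]; exact one_pos))
  have hV' : V ∈ 𝓝 ((p y)⁻¹ • y) := by rwa [hy, inv_one, one_smul]
  obtain ⟨x, hxG, hxV, hxpos⟩ := (dense_setOf_isGateauxPoint hK).inter_nhds_nonempty
    (inter_mem (hcont.preimage_mem_nhds hV') hpos)
  exact ⟨_, hxV, hp.exists_hasUniqueSupport_of_isGateauxPoint hK hxG hxpos⟩

theorem uniqueSupports_univ_infinite [CompleteSpace X] [TopologicalSpace.SeparableSpace X]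
    (hp : IsNonnegSublinear p) {K : NNReal} (hK : LipschitzWith K p)
    (hnp : ¬ IsPolyhedral {x | p x ≤ 1}) : (uniqueSupports p univ).Infinite := by
  intro hT
  apply hnp
  suffices {x | p x ≤ 1} = ⋂ g ∈ uniqueSupports p univ, {x | g x ≤ 1} from
    this ▸ isPolyhedral_biInter_setOf_le_one hT
  refine Subset.antisymm (fun x hx ↦ mem_iInter₂.2 fun g ⟨y, _, hy⟩ ↦ (hy.2.1.1 x).trans hx) ?_
  intro x hx
  by_contra hpx
  replace hpx : 1 < p x := lt_of_not_ge hpx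
  have hpx₀ : 0 < p x := one_pos.trans hpx
  have hy : p ((p x)⁻¹ • x) = 1 := by
    rw [hp.smul_of_nonneg (by positivity), inv_mul_cancel₀ hpx₀.ne']
  have hclosed : IsClosed (⋃ g ∈ uniqueSupports p univ, {z | g z = 1}) :=
    hT.isClosed_biUnion fun g _ ↦ isClosed_eq g.continuous continuous_const
  have hsub : {y | ∃ g, HasUniqueSupport p y g} ⊆ ⋃ g ∈ uniqueSupports p univ, {z | g z = 1} :=
    fun y ⟨g, hg⟩ ↦ mem_biUnion ⟨y, mem_univ y, hg⟩ hg.2.1.2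
  obtain ⟨g, hgT, hgy⟩ := mem_iUnion₂.1
    (hclosed.closure_subset_iff.2 hsub (hp.setOf_eq_one_subset_closure hK hy))
  have hgx : (p x)⁻¹ * g x = 1 := by simpa using hgy
  rw [inv_mul_eq_one₀ hpx₀.ne'] at hgx
  have := mem_iInter₂.1 hx g hgT
  simp only [mem_ofPred_eq] at this
  linarith

end IsNonnegSublinear

theorem Sees.symm {a b : X} (h : Sees p a b) : Sees p b a := by
  obtain ⟨z, hz, hpz⟩ := h
  exact ⟨z, segment_symm ℝ a b ▸ hz, hpz⟩

theorem Sees.eventually_smul (hp : Continuous p) {b u : X} (h : Sees p b u) :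
    ∀ᶠ ε in 𝓝 (0 : ℝ), Sees p b ((1 + ε) • u) := by
  obtain ⟨z, ⟨a, c, ha, hc, hac, rfl⟩, hpz⟩ := h
  have hcont : Continuous fun ε : ℝ ↦ p (a • b + c • ((1 + ε) • u)) := by fun_prop
  filter_upwards [hcont.continuousAt.eventually_lt continuousAt_const (by simpa using hpz)]
    with ε hε
  exact ⟨_, ⟨a, c, ha, hc, hac, rfl⟩, hε⟩

theorem not_sees_of_one_le {g : X →L[ℝ] ℝ} (hg : ∀ z, g z ≤ p z) {a b : X}
    (ha : 1 ≤ g a) (hb : 1 ≤ g b) : ¬ Sees p a b := by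
  rintro ⟨z, hz, hpz⟩
  have : 1 ≤ g z := (convex_halfSpace_ge g.toLinearMap.isLinear 1).segment_subset ha hb hz
  linarith [hg z]

namespace IsNonnegSublinear

theorem exists_isSupportAt_of_not_sees (hp : IsNonnegSublinear p) {K : NNReal}
    (hK : LipschitzWith K p) {b y : X} (hy : p y = 1) (h : ¬ Sees p b y) :
    ∃ g, IsSupportAt p g y ∧ 1 ≤ g b := by
  have hdisj : Disjoint {x | p x < 1} (segment ℝ b y) :=
    disjoint_left.2 fun z hz hzseg ↦ h ⟨z, hzseg, hz⟩
  obtain ⟨f, u, hfu, hseg⟩ := geometric_hahn_banach_open (by simpa using hp.convexOn.convex_lt 1)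
    (isOpen_lt hK.continuous continuous_const) (convex_segment b y) hdisj
  have hu : 0 < u := by simpa using hfu 0 (by simp [hp.map_zero])
  have hge : ∀ z ∈ segment ℝ b y, 1 ≤ (u⁻¹ • f) z := fun z hz ↦ by
    simpa [one_le_inv_mul₀ hu] using hseg z hz
  have hle : ∀ z, (u⁻¹ • f) z ≤ p z := hp.le_of_forall_lt_one (f := (u⁻¹ • f : X →L[ℝ] ℝ))
    fun z hz ↦ by simpa [inv_mul_lt_one₀ hu] using hfu z hz
  exact ⟨u⁻¹ • f, ⟨hle, le_antisymm ((hle y).trans hy.le) (hge y (right_mem_segment ℝ b y))⟩,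
    hge b (left_mem_segment ℝ b y)⟩

theorem sees_of_apply_lt_one (hp : IsNonnegSublinear p) {K : NNReal} (hK : LipschitzWith K p)
    {b y : X} {g : X →L[ℝ] ℝ} (hy : HasUniqueSupport p y g) (hb : g b < 1) : Sees p b y := by
  by_contra h
  obtain ⟨h, hh, hhb⟩ := hp.exists_isSupportAt_of_not_sees hK hy.1 h
  rw [hy.2.2 h hh] at hhb
  linarith

theorem add_lt_two (hp : IsNonnegSublinear p) {K : NNReal} (hK : LipschitzWith K p)
    {y₁ y₂ : X} {γ₁ γ₂ : X →L[ℝ] ℝ} (h₁ : HasUniqueSupport p y₁ γ₁)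
    (h₂ : HasUniqueSupport p y₂ γ₂) (hne : γ₁ ≠ γ₂) : p (y₁ + y₂) < 2 := by
  refine lt_of_le_of_ne (by linarith [hp.add_le y₁ y₂, h₁.1, h₂.1]) fun heq ↦ hne ?_
  obtain ⟨h, hhp, hh⟩ := hp.exists_le_apply_eq hK (y₁ + y₂)
  rw [heq, map_add] at hh
  have hy₁ : h y₁ = 1 := by linarith [hhp y₁, hhp y₂, h₁.1, h₂.1]
  have hy₂ : h y₂ = 1 := by linarith
  rw [← h₁.2.2 h ⟨hhp, hy₁⟩, ← h₂.2.2 h ⟨hhp, hy₂⟩]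

theorem exists_infinite_setOf_apply_le (hp : IsNonnegSublinear p) {K : NNReal}
    (hK : LipschitzWith K p) {R : Set X} (hR : (uniqueSupports p R).Infinite) :
    ∃ u ∈ R, ∃ gu, HasUniqueSupport p u gu ∧
      ∃ δ > 0, {g ∈ uniqueSupports p R | g u ≤ 1 - δ}.Infinite := by
  by_contra! hfin
  obtain ⟨γ₁, ⟨y₁, hy₁R, h₁⟩, γ₂, ⟨y₂, hy₂R, h₂⟩, hne⟩ := hR.nontrivial
  set δ := (2 - p (y₁ + y₂)) / 2 with hδdef
  have hδ : 0 < δ := half_pos (sub_pos.2 (hp.add_lt_two hK h₁ h₂ hne))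
  obtain ⟨γ, ⟨y, hyR, hy⟩, hγ⟩ := (hR.sdiff ((hfin y₁ hy₁R γ₁ h₁ δ hδ).union
    (hfin y₂ hy₂R γ₂ h₂ δ hδ))).nonempty
  have hγmem : γ ∈ uniqueSupports p R := ⟨y, hyR, hy⟩
  simp only [mem_union, mem_ofPred_eq, not_or, not_and, not_le] at hγ
  have := hy.2.1.1 (y₁ + y₂)
  rw [map_add] at this
  linarith [hγ.1 hγmem, hγ.2 hγmem, hδdef]

end IsNonnegSublinear

theorem exists_infinite_of_forall_exists_insert {α : Type*} [DecidableEq α]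
    {P : Finset α → Prop} (h₀ : P ∅) (hstep : ∀ s, P s → ∃ a ∉ s, P (insert a s)) :
    ∃ A : Set α, A.Infinite ∧ ∀ a ∈ A, ∀ b ∈ A, ∃ s, P s ∧ a ∈ s ∧ b ∈ s := by
  choose next hnext_notMem hnext using hstep
  let seq : ℕ → {s // P s} :=
    fun n ↦ Nat.rec ⟨∅, h₀⟩ (fun _ s ↦ ⟨insert (next s.1 s.2) s.1, hnext s.1 s.2⟩) n
  have hmono : Monotone fun n ↦ (seq n).1 :=
    monotone_nat_of_le_succ fun n ↦ Finset.subset_insert _ _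
  have hinj : Function.Injective fun n ↦ next (seq n).1 (seq n).2 :=
    .of_lt_imp_ne fun m n hmn heq ↦ hnext_notMem _ (seq n).2
      (heq ▸ hmono (Nat.succ_le_of_lt hmn) (Finset.mem_insert_self _ _))
  refine ⟨⋃ n, ↑(seq n).1, infinite_of_injective_forall_mem hinj
    fun n ↦ mem_iUnion.2 ⟨n + 1, Finset.mem_insert_self _ _⟩, fun a ha b hb ↦ ?_⟩
  obtain ⟨m, ham⟩ := mem_iUnion.1 ha
  obtain ⟨n, hbn⟩ := mem_iUnion.1 hb
  exact ⟨_, (seq (max m n)).2, hmono (le_max_left m n) ham, hmono (le_max_right m n) hbn⟩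

def IsExtendableHidden (p : X → ℝ) (s : Finset X) : Prop :=
  (∀ b ∈ s, 1 < p b) ∧ (s : Set X).Pairwise (Sees p) ∧
    (uniqueSupports p {y | ∀ b ∈ s, Sees p b y}).Infinite

theorem IsExtendableHidden.exists_insert [DecidableEq X] {s : Finset X}
    (hs : IsExtendableHidden p s) (hp : IsNonnegSublinear p) {K : NNReal}
    (hK : LipschitzWith K p) : ∃ b ∉ s, IsExtendableHidden p (insert b s) := by
  obtain ⟨hout, hpair, hinf⟩ := hs
  obtain ⟨u, huR, gu, hu, δ, hδ, hinf'⟩ := hp.exists_infinite_setOf_apply_le hK hinf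
  have hsees : ∀ᶠ ε in 𝓝 (0 : ℝ), ∀ b ∈ s, Sees p b ((1 + ε) • u) :=
    (eventually_all_finset s).2 fun b hb ↦ (huR b hb).eventually_smul hK.continuous
  obtain ⟨ε, ⟨hsees, hεδ⟩, hε⟩ := (((hsees.and (eventually_lt_nhds hδ)).filter_mono
    nhdsWithin_le_nhds).and (self_mem_nhdsWithin (s := Ioi 0))).exists
  have hε : (0 : ℝ) < ε := hε
  have hgu : gu ((1 + ε) • u) = 1 + ε := by rw [map_smul, hu.2.1.2, smul_eq_mul, mul_one]
  have hpu : p ((1 + ε) • u) = 1 + ε := by rw [hp.smul_of_nonneg (by linarith), hu.1, mul_one]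
  refine ⟨(1 + ε) • u, fun hmem ↦ not_sees_of_one_le hu.2.1.1 (by linarith) hu.2.1.2.ge
    (huR _ hmem), ?_, ?_, ?_⟩
  · simp only [Finset.forall_mem_insert, hpu]
    exact ⟨by linarith, hout⟩
  · rw [Finset.coe_insert]
    exact hpair.insert fun b hb _ ↦ ⟨(hsees b hb).symm, hsees b hb⟩
  · refine hinf'.mono ?_
    rintro g ⟨⟨y, hyR, hy⟩, hgu_le⟩
    refine ⟨y, Finset.forall_mem_insert _ _ _ |>.2 ⟨hp.sees_of_apply_lt_one hK hy ?_, hyR⟩, hy⟩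
    rw [map_smul, smul_eq_mul]
    nlinarith [mul_pos hε hδ]

theorem IsNonnegSublinear.exists_infinite_pairwise_sees [CompleteSpace X]
    [TopologicalSpace.SeparableSpace X] (hp : IsNonnegSublinear p) {K : NNReal}
    (hK : LipschitzWith K p) (hnp : ¬ IsPolyhedral {x | p x ≤ 1}) :
    ∃ A : Set X, A.Infinite ∧ (∀ a ∈ A, 1 < p a) ∧ A.Pairwise (Sees p) := by
  classical
  have h₀ : IsExtendableHidden p ∅ :=
    ⟨by simp, by simp, by simpa using hp.uniqueSupports_univ_infinite hK hnp⟩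
  obtain ⟨A, hA, hAs⟩ :=
    exists_infinite_of_forall_exists_insert h₀ fun s hs ↦ hs.exists_insert hp hK
  refine ⟨A, hA, fun a ha ↦ ?_, fun a ha b hb hab ↦ ?_⟩
  · obtain ⟨s, hs, has, -⟩ := hAs a ha a ha
    exact hs.1 a has
  · obtain ⟨s, hs, has, hbs⟩ := hAs a ha b hb
    exact hs.2.1 has hbs hab

theorem exists_infinite_hidden_of_mem_nhds_zero [CompleteSpace X]
    [TopologicalSpace.SeparableSpace X] {S : Set X} (hclosed : IsClosed S) (hconv : Convex ℝ S)
    (hS : S ∈ 𝓝 0) (hpoly : ¬ IsPolyhedral S) :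
    ∃ A : Set X, A.Infinite ∧ A ∩ S = ∅ ∧
      ∀ a ∈ A, ∀ b ∈ A, a ≠ b → (segment ℝ a b ∩ S).Nonempty := by
  have hgauge : IsNonnegSublinear (gauge S) :=
    ⟨fun _ ↦ gauge_nonneg _, gauge_add_le hconv (absorbent_nhds_zero hS),
      fun hc x ↦ by rw [gauge_smul_of_nonneg hc, smul_eq_mul]⟩
  obtain ⟨K, hK⟩ := hconv.lipschitz_gauge hS
  have hle : ∀ x, gauge S x ≤ 1 ↔ x ∈ S := fun x ↦ by
    rw [gauge_le_one_iff_mem_closure hconv hS, hclosed.closure_eq]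
  obtain ⟨A, hA, hout, hpair⟩ :=
    hgauge.exists_infinite_pairwise_sees hK (by rwa [show {x | gauge S x ≤ 1} = S from ext hle])
  refine ⟨A, hA, eq_empty_of_forall_notMem fun x ⟨hxA, hxS⟩ ↦ ?_, fun a ha b hb hab ↦ ?_⟩
  · linarith [(hle x).2 hxS, hout x hxA]
  · obtain ⟨z, hz, hzS⟩ := hpair ha hb hab
    exact ⟨z, hz, (hle z).1 hzS.le⟩

end

theorem stmt_15 {X : Type*} [NormedAddCommGroup X] [InnerProductSpace ℝ X]
    [CompleteSpace X] [TopologicalSpace.SeparableSpace X]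
    (Cb : Set X) (hclosed : IsClosed Cb) (hconv : Convex ℝ Cb)
    (hbody : (interior Cb).Nonempty)
    (hpoly : ¬ ∃ (n : ℕ) (f : Fin n → X →L[ℝ] ℝ) (a : Fin n → ℝ),
      Cb = ⋂ i, {x : X | f i x ≤ a i}) :
    ∃ A : Set X, A.Infinite ∧ A ∩ Cb = ∅ ∧
      ∀ a ∈ A, ∀ b ∈ A, a ≠ b → (segment ℝ a b ∩ Cb).Nonempty := by
  obtain ⟨x₀, hx₀⟩ := hbody
  have hS : (x₀ + ·) ⁻¹' Cb ∈ 𝓝 0 := (continuous_const_add x₀).continuousAt.preimage_mem_nhds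
    (by rw [add_zero]; exact mem_interior_iff_mem_nhds.1 hx₀)
  have hSpoly : ¬ IsPolyhedral ((x₀ + ·) ⁻¹' Cb) := fun h ↦ hpoly
    (show IsPolyhedral Cb by simpa [preimage_preimage] using h.preimage_const_add (-x₀))
  obtain ⟨A, hA, hout, hseg⟩ := exists_infinite_hidden_of_mem_nhds_zero
    (hclosed.preimage (continuous_const_add x₀)) (hconv.translate_preimage_right x₀) hS hSpoly
  refine ⟨(x₀ + ·) '' A, hA.image (add_right_injective x₀).injOn, ?_, ?_⟩
  · rw [← image_inter_preimage, hout, image_empty]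
  · rintro _ ⟨a, ha, rfl⟩ _ ⟨b, hb, rfl⟩ hab
    obtain ⟨z, hz, hzS⟩ := hseg a ha b hb (fun h ↦ hab (h ▸ rfl))
    exact ⟨x₀ + z, segment_translate_image ℝ x₀ a b ▸ mem_image_of_mem _ hz, hzS⟩
end

section
/- Let C be a convex subset of a real vector space X and suppose an infinite set A ⊆ X \ C is hidden behind C (every segment between distinct points of A meets C). Then A has at most two points outside the affine hull of C; in particular A ∩ aff(C) is infinite. -/
theorem stmt_16 {X : Type*} [AddCommGroup X] [Module ℝ X]
    (C : Set X) (hC : Convex ℝ C)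
    (A : Set X) (hinf : A.Infinite) (hdisj : A ∩ C = ∅)
    (hidden : ∀ a ∈ A, ∀ b ∈ A, a ≠ b → (segment ℝ a b ∩ C).Nonempty) :
    (A \ (affineSpan ℝ C : Set X)).Finite ∧
    (A \ (affineSpan ℝ C : Set X)).ncard ≤ 2 ∧
    (A ∩ (affineSpan ℝ C : Set X)).Infinite := by
  obtain ⟨a0, ha0, b0, hb0, hab0⟩ := hinf.nontrivial
  obtain ⟨p0, hp0seg, hp0C⟩ := hidden a0 ha0 b0 hb0 hab0
  set S : Set X := (affineSpan ℝ C : Set X) with hS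
  set V := vectorSpan ℝ C with hV
  set f := V.mkQ with hf
  have hc0span : p0 ∈ affineSpan ℝ C := subset_affineSpan ℝ C hp0C
  have hmem : ∀ x : X, x ∈ S ↔ f (x - p0) = 0 := by
    intro x
    rw [hf, Submodule.mkQ_apply, Submodule.Quotient.mk_eq_zero]
    constructor
    · intro hx
      have := AffineSubspace.vsub_mem_direction hx hc0span
      rwa [direction_affineSpan] at this
    · intro hx
      have hx' : x -ᵥ p0 ∈ (affineSpan ℝ C).direction := by
        rwa [direction_affineSpan]
      exact (AffineSubspace.vsub_right_mem_direction_iff_mem hc0span x).mp hx'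
  have key : ∀ a ∈ A \ S, ∀ b ∈ A \ S, a ≠ b →
      ∃ s : ℝ, 0 < s ∧ f (b - p0) = -(s • f (a - p0)) := by
    intro a ha b hb hab
    obtain ⟨p, hpseg, hpC⟩ := hidden a ha.1 b hb.1 hab
    obtain ⟨u, v, hu, hv, huv, hp⟩ := hpseg
    have hα : f (a - p0) ≠ 0 := fun h => ha.2 ((hmem a).mpr h)
    have hβ : f (b - p0) ≠ 0 := fun h => hb.2 ((hmem b).mpr h)
    have hcalc : u • (a - p0) + v • (b - p0) = (u • a + v • b) - p0 := by
      have hv' : v = 1 - u := by linarith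
      subst hv'
      module
    have heq : u • f (a - p0) + v • f (b - p0) = 0 := by
      have h0 : f (p - p0) = 0 := (hmem p).mp (subset_affineSpan ℝ C hpC)
      rw [← hp, ← hcalc] at h0
      simpa [map_add, map_smul] using h0
    have hu0 : u ≠ 0 := by
      rintro rfl
      rw [zero_smul, zero_add] at heq
      exact hβ ((smul_eq_zero.mp heq).resolve_left (by linarith))
    have hv0 : v ≠ 0 := by
      rintro rfl
      rw [zero_smul, add_zero] at heq
      exact hα ((smul_eq_zero.mp heq).resolve_left hu0)
    refine ⟨u / v, div_pos (lt_of_le_of_ne hu (Ne.symm hu0)) (lt_of_le_of_ne hv (Ne.symm hv0)), ?_⟩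
    have h2 : v • f (b - p0) = -(u • f (a - p0)) := by
      rw [eq_neg_iff_add_eq_zero, add_comm]; exact heq
    calc f (b - p0) = v⁻¹ • (v • f (b - p0)) := by
          rw [smul_smul, inv_mul_cancel₀ hv0, one_smul]
      _ = -((u / v) • f (a - p0)) := by
          rw [h2, smul_neg, smul_smul, div_eq_inv_mul]
  have h3 : ∀ a ∈ A \ S, ∀ b ∈ A \ S, ∀ c ∈ A \ S,
      a ≠ b → a ≠ c → b ≠ c → False := by
    intro a ha b hb c hc hab hac hbc
    obtain ⟨s, hs, hsβ⟩ := key a ha b hb hab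
    obtain ⟨t, ht, htγ⟩ := key a ha c hc hac
    obtain ⟨r, hr, hrγ⟩ := key b hb c hc hbc
    have hα : f (a - p0) ≠ 0 := fun h => ha.2 ((hmem a).mpr h)
    rw [hsβ] at hrγ
    rw [htγ] at hrγ
    have h5 : ((r * s) + t) • f (a - p0) = 0 := by
      calc ((r * s) + t) • f (a - p0)
          = -(r • -(s • f (a - p0))) - -(t • f (a - p0)) := by module
        _ = 0 := by rw [hrγ, sub_self]
    have hpos : (r * s) + t ≠ 0 := by positivity
    exact hα ((smul_eq_zero.mp h5).resolve_left hpos)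
  have hsub : ∃ x y : X, A \ S ⊆ {x, y} := by
    rcases Set.eq_empty_or_nonempty (A \ S) with h | ⟨x, hx⟩
    · exact ⟨a0, a0, by simp [h]⟩
    · by_cases h2 : ∀ z ∈ A \ S, z = x
      · exact ⟨x, x, fun z hz => by simp [h2 z hz]⟩
      · push_neg at h2
        obtain ⟨y, hy, hyx⟩ := h2
        refine ⟨x, y, fun z hz => ?_⟩
        by_contra hzz
        simp only [Set.mem_insert_iff, Set.mem_singleton_iff, not_or] at hzz
        exact h3 x hx y hy z hz (Ne.symm hyx) (Ne.symm hzz.1) (Ne.symm hzz.2)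
  obtain ⟨x, y, hxy⟩ := hsub
  have hpairfin : ({x, y} : Set X).Finite := (Set.finite_singleton y).insert x
  have hfin : (A \ S).Finite := hpairfin.subset hxy
  refine ⟨hfin, ?_, ?_⟩
  · calc (A \ S).ncard ≤ ({x, y} : Set X).ncard := Set.ncard_le_ncard hxy hpairfin
      _ ≤ 2 := by
        have := Set.ncard_insert_le x ({y} : Set X)
        simpa using this
  · intro hASfin
    have hsubA : A ⊆ (A \ S) ∪ (A ∩ S) := by
      intro z hz
      by_cases hzS : z ∈ S
      · exact Or.inr ⟨hz, hzS⟩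
      · exact Or.inl ⟨hz, hzS⟩
    exact hinf ((hfin.union hASfin).subset hsubA)
end

section
/- Let C̄ be a closed convex body in a real Hilbert space, and let x_n, x_m ∈ ∂C̄ with unit outward normals y_n, y_m (i.e., ⟨z, y_k⟩ ≤ ⟨x_k, y_k⟩ for all z ∈ C̄) such that the closed balls of radius ε_n around x_n and ε_m around x_m intersected with ∂C̄ lie in the supporting hyperplanes {z : ⟨z,y_n⟩ = ⟨x_n,y_n⟩} and {z : ⟨z,y_m⟩ = ⟨x_m,y_m⟩} respectively (equivalently, the flat pieces of radius ε_n, ε_m lie in C̄), and ‖y_n − y_m‖ ≥ ε_n + ε_m. Then for any 0 < δ_n ≤ ε_n²/3 the segment [x_n + δ_n y_n, x_m] meets the interior of C̄. -/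
/-!
Let `w` be the component of `y_m` orthogonal to `y_n`. The flat piece at `x_n` contains
`x_n + ε_n w / ‖w‖`, so `⟪x_m - x_n, y_m⟫ ≥ ε_n ‖w‖`; since `‖w‖² = 1 - ⟪y_n, y_m⟫²` and
`‖y_n - y_m‖ > ε_n`, this beats `δ ⟪y_n, y_m⟫` once `δ ≤ ε_n² / 3`. Hence `x_n + δ y_n` lies strictly
below the supporting hyperplane at `x_m`. A point of the segment close to `x_m` is then a proper
convex combination of an interior point and a point of the flat piece at `x_m`, so it is interior.
-/

open scoped RealInnerProductSpace
open Filter Topology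

section

variable {X : Type*} [NormedAddCommGroup X] [InnerProductSpace ℝ X]

theorem inner_lt_of_mem_interior {C : Set X} {y a : X} {c : ℝ} (hy : y ≠ 0)
    (hC : ∀ z ∈ C, ⟪z, y⟫ ≤ c) (ha : a ∈ interior C) : ⟪a, y⟫ < c := by
  have hnear : ∀ᶠ r : ℝ in 𝓝 0, a + r • y ∈ C := by
    have hcont : Tendsto (fun r : ℝ => a + r • y) (𝓝 0) (𝓝 a) := by
      have : Continuous (fun r : ℝ => a + r • y) := by fun_prop
      simpa using this.tendsto 0
    exact hcont (mem_interior_iff_mem_nhds.mp ha)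
  obtain ⟨r, hrC, hr⟩ :=
    ((hnear.filter_mono nhdsWithin_le_nhds).and (self_mem_nhdsWithin (s := Set.Ioi 0))).exists
  have hle := hC _ hrC
  rw [inner_add_left, real_inner_smul_left, real_inner_self_eq_norm_sq] at hle
  have : 0 < r * ‖y‖ ^ 2 := by positivity
  linarith

theorem inner_add_mul_norm_sub_le_of_flat_subset {C : Set X} {x y y' : X} {ε c : ℝ}
    (hy : ‖y‖ = 1) (hε : 0 ≤ ε) (hflat : {z : X | ⟪z, y⟫ = ⟪x, y⟫ ∧ ‖z - x‖ ≤ ε} ⊆ C)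
    (hC : ∀ z ∈ C, ⟪z, y'⟫ ≤ c) :
    ⟪x, y'⟫ + ε * ‖y' - ⟪y, y'⟫ • y‖ ≤ c := by
  set w := y' - ⟪y, y'⟫ • y
  have hwy : ⟪w, y⟫ = 0 := by
    rw [inner_sub_left, real_inner_smul_left, real_inner_self_eq_norm_sq, hy, real_inner_comm]
    ring
  have hwy' : ⟪w, y'⟫ = ‖w‖ ^ 2 := by
    rw [show y' = w + ⟪y, y'⟫ • y from (sub_add_cancel _ _).symm, inner_add_right,
      real_inner_smul_right, hwy, real_inner_self_eq_norm_sq, mul_zero, add_zero]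
  rcases (norm_nonneg w).eq_or_lt with hw | hw
  · simpa [← hw] using hC x (hflat ⟨rfl, by simpa using hε⟩)
  · have hz := hC _ (hflat (a := x + (ε / ‖w‖) • w) ⟨?_, ?_⟩)
    · rw [inner_add_left, real_inner_smul_left, hwy'] at hz
      convert hz using 2
      field_simp
    · rw [inner_add_left, real_inner_smul_left, hwy, mul_zero, add_zero]
    · rw [add_sub_cancel_left, norm_smul, Real.norm_of_nonneg (by positivity),
        div_mul_cancel₀ _ hw.ne']

theorem mul_inner_lt_mul_norm_sub_inner_smul {y y' : X} {ε δ : ℝ} (hy : ‖y‖ = 1)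
    (hy' : ‖y'‖ = 1) (hε : 0 < ε) (hsep : ε < ‖y - y'‖) (hδ : 0 < δ) (hδε : δ ≤ ε ^ 2 / 3) :
    δ * ⟪y, y'⟫ < ε * ‖y' - ⟪y, y'⟫ • y‖ := by
  obtain ⟨s, hs⟩ : ∃ s, s = ⟪y, y'⟫ := ⟨_, rfl⟩
  rw [← hs]
  have hN : ‖y' - s • y‖ ^ 2 = 1 - s ^ 2 := by
    rw [norm_sub_sq_real, real_inner_smul_right, real_inner_comm, ← hs, norm_smul, hy, hy',
      Real.norm_eq_abs, mul_one, sq_abs]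
    ring
  have hsep' : ε ^ 2 < 2 - 2 * s := by
    have : ‖y - y'‖ ^ 2 = 2 - 2 * s := by rw [norm_sub_sq_real, hy, hy', ← hs]; ring
    nlinarith
  have hs1 : s ≤ 1 := hs ▸ (real_inner_le_norm y y').trans (by rw [hy, hy', one_mul])
  rcases lt_trichotomy s 0 with hs0 | rfl | hs0
  · nlinarith [norm_nonneg (y' - s • y)]
  · simp [hy', hε]
  · have hN3 : ε / 3 < ‖y' - s • y‖ := by
      refine lt_of_pow_lt_pow_left₀ 2 (norm_nonneg _) ?_
      nlinarith
    calc δ * s ≤ δ := mul_le_of_le_one_right hδ.le hs1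
      _ ≤ ε * (ε / 3) := by linarith
      _ < ε * ‖y' - s • y‖ := mul_lt_mul_of_pos_left hN3 hε

theorem Convex.segment_inter_interior_nonempty_of_flat_subset {C : Set X} (hC : Convex ℝ C)
    {a x y p : X} {ε : ℝ} (ha : a ∈ interior C) (hε : 0 < ε)
    (hflat : {z : X | ⟪z, y⟫ = ⟪x, y⟫ ∧ ‖z - x‖ ≤ ε} ⊆ C)
    (hay : ⟪a, y⟫ < ⟪x, y⟫) (hpy : ⟪p, y⟫ < ⟪x, y⟫) :
    (segment ℝ p x ∩ interior C).Nonempty := by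
  set γ := ⟪x, y⟫ - ⟪a, y⟫ with hγ
  set μ := ⟪x, y⟫ - ⟪p, y⟫ with hμ
  have hγ0 : 0 < γ := sub_pos.2 hay
  have hμ0 : 0 < μ := sub_pos.2 hpy
  -- `x + t • (p - x) = τ t • a + (1 - τ t) • q t`, where `τ t` is chosen so that `q t` lies on
  -- the hyperplane; `q t → x` as `t → 0`, so `q t` is in the flat piece for small `t`.
  let τ : ℝ → ℝ := fun t => t * μ / γ
  let q : ℝ → X := fun t => (1 - τ t)⁻¹ • (x + t • (p - x) - τ t • a)
  have hτ : Tendsto τ (𝓝 0) (𝓝 0) := by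
    have : Continuous τ := by fun_prop
    simpa [τ] using this.tendsto 0
  have hq : Tendsto q (𝓝 0) (𝓝 x) := by
    have : ContinuousAt q 0 := by fun_prop (disch := simp [τ])
    simpa [q, τ] using this.tendsto
  have hsmall : ∀ᶠ t in 𝓝 (0 : ℝ), t < 1 ∧ τ t < 1 ∧ q t ∈ Metric.closedBall x ε :=
    (tendsto_id.eventually_lt_const zero_lt_one).and
      ((hτ.eventually_lt_const zero_lt_one).and (hq.eventually (Metric.closedBall_mem_nhds x hε)))
  obtain ⟨t, ⟨ht1, hτ1, hqx⟩, ht0⟩ :=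
    ((hsmall.filter_mono nhdsWithin_le_nhds).and (self_mem_nhdsWithin (s := Set.Ioi 0))).exists
  have h1τ : 1 - τ t ≠ 0 := by linarith
  have hqC : q t ∈ C := by
    refine hflat ⟨?_, by simpa [dist_eq_norm] using hqx⟩
    simp only [q, inner_smul_left, inner_add_left, inner_sub_left, RCLike.conj_to_real]
    field_simp
    simp only [τ]
    field_simp
    linear_combination (t * μ) * hγ - t * γ * hμ
  refine ⟨x + t • (p - x), ⟨t, 1 - t, ht0.le, (by linarith), by ring, by module⟩, ?_⟩
  have hr : τ t • a + (1 - τ t) • q t = x + t • (p - x) := by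
    simp only [q, smul_smul, mul_inv_cancel₀ h1τ, one_smul]
    abel
  exact hr ▸ hC.combo_interior_self_mem_interior ha hqC (by positivity) (by linarith) (by ring)

end

theorem stmt_19_general {X : Type*} [NormedAddCommGroup X] [InnerProductSpace ℝ X]
    (Cb : Set X) (hconv : Convex ℝ Cb)
    (hbody : (interior Cb).Nonempty)
    (xn xm yn ym : X) (εn εm : ℝ)
    (hyn : ‖yn‖ = 1) (hym : ‖ym‖ = 1)
    (hsuppm : ∀ z ∈ Cb, ⟪z, ym⟫ ≤ ⟪xm, ym⟫)
    (hεn : 0 < εn) (hεm : 0 < εm)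
    (hflatn : {z : X | ⟪z, yn⟫ = ⟪xn, yn⟫ ∧ ‖z - xn‖ ≤ εn} ⊆ Cb)
    (hflatm : {z : X | ⟪z, ym⟫ = ⟪xm, ym⟫ ∧ ‖z - xm‖ ≤ εm} ⊆ Cb)
    (hsep : εn + εm ≤ ‖yn - ym‖) :
    ∀ δ : ℝ, 0 < δ → δ ≤ εn ^ 2 / 3 →
      (segment ℝ (xn + δ • yn) xm ∩ interior Cb).Nonempty := by
  intro δ hδ hδε
  obtain ⟨a, ha⟩ := hbody
  have hym0 : ym ≠ 0 := norm_ne_zero_iff.mp (by rw [hym]; exact one_ne_zero)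
  refine hconv.segment_inter_interior_nonempty_of_flat_subset ha hεm hflatm
    (inner_lt_of_mem_interior hym0 hsuppm ha) ?_
  have hflat_below := inner_add_mul_norm_sub_le_of_flat_subset hyn hεn.le hflatn hsuppm
  have htilt := mul_inner_lt_mul_norm_sub_inner_smul hyn hym hεn (by linarith) hδ hδε
  rw [inner_add_left, real_inner_smul_left]
  linarith

theorem stmt_19 {X : Type*} [NormedAddCommGroup X] [InnerProductSpace ℝ X]
    (Cb : Set X) (hclosed : IsClosed Cb) (hconv : Convex ℝ Cb)
    (hbody : (interior Cb).Nonempty)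
    (xn xm yn ym : X) (εn εm : ℝ)
    (hxn : xn ∈ frontier Cb) (hxm : xm ∈ frontier Cb)
    (hyn : ‖yn‖ = 1) (hym : ‖ym‖ = 1)
    (hsuppn : ∀ z ∈ Cb, ⟪z, yn⟫ ≤ ⟪xn, yn⟫)
    (hsuppm : ∀ z ∈ Cb, ⟪z, ym⟫ ≤ ⟪xm, ym⟫)
    (hεn : 0 < εn) (hεm : 0 < εm)
    (hflatn : {z : X | ⟪z, yn⟫ = ⟪xn, yn⟫ ∧ ‖z - xn‖ ≤ εn} ⊆ Cb)
    (hflatm : {z : X | ⟪z, ym⟫ = ⟪xm, ym⟫ ∧ ‖z - xm‖ ≤ εm} ⊆ Cb)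
    (hsep : εn + εm ≤ ‖yn - ym‖) :
    ∀ δ : ℝ, 0 < δ → δ ≤ εn ^ 2 / 3 →
      (segment ℝ (xn + δ • yn) xm ∩ interior Cb).Nonempty :=
  stmt_19_general Cb hconv hbody xn xm yn ym εn εm hyn hym hsuppm hεn hεm hflatn hflatm hsep
end
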